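/- arXiv:1903.04797 — 3 statements merged into one kernel-verified Lean document; each statement's English description precedes it below -/
import Mathlib

section
/- The SMC normalizing constant estimator is non-negative and unbiased: under the SMC distribution q^{SMC}, the estimator Ẑ_T = ∏_{t=1}^T (1/N) ∑_{i=1}^N w̃_t^i satisfies Ẑ_T ≥ 0 and E_{q^{SMC}}[Ẑ_T] = Z_T. -/
open MeasureTheory

namespace SMCTut

variable {E : Type*} [MeasurableSpace E] {N : ℕ}

/-- Ancestral trajectories of the particle system: `traj X A t i` is the trajectory
`x_{1:t+1}^i` (0-indexed time) of particle `i` at time `t`. -/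
def traj (X : ℕ → Fin N → E) (A : ℕ → Fin N → Fin N) : (t : ℕ) → Fin N → Fin (t + 1) → E
  | 0 => fun i _ => X 0 i
  | t + 1 => fun i => Fin.snoc (traj X A t (A t i)) (X (t + 1) i)

/-- `γ̃_{t-1}` evaluated on the first `t-1` coordinates of `x_{1:t}` (with `γ̃₀ ≡ 1`). -/
def gprev (γ : (t : ℕ) → (Fin (t + 1) → E) → ℝ) : (t : ℕ) → (Fin (t + 1) → E) → ℝ
  | 0 => fun _ => 1
  | t + 1 => fun x => γ t (Fin.init x)

/-- Incremental importance weight `w̃_t(x_{1:t}) = γ̃_t / (γ̃_{t-1} q_t)`,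
equal to `0` when the denominator vanishes (Lean's division convention). -/
noncomputable def wt (γ q : (t : ℕ) → (Fin (t + 1) → E) → ℝ) (t : ℕ)
    (x : Fin (t + 1) → E) : ℝ :=
  γ t x / (gprev γ t x * q t x)

variable {S : ℕ}

/-- Extension of the particle array to all times (only times `< S+1` are ever used). -/
def extX (X : Fin (S + 1) → Fin N → E) : ℕ → Fin N → E :=
  fun t i => if h : t < S + 1 then X ⟨t, h⟩ i else X 0 i

/-- Extension of the ancestor array to all times (only times `< S` are ever used). -/
def extA (A : Fin S → Fin N → Fin N) : ℕ → Fin N → Fin N :=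
  fun t i => if h : t < S then A ⟨t, h⟩ i else i

/-- Trajectory `x_{1:t+1}^i` of the particle system `(X, A)`. -/
def ptraj (X : Fin (S + 1) → Fin N → E) (A : Fin S → Fin N → Fin N)
    (t : ℕ) (i : Fin N) : Fin (t + 1) → E :=
  traj (extX X) (extA A) t i

/-- Joint density of all random variables generated by SMC with multinomial resampling,
with respect to `μ^{⊗((S+1)N)}` tensored with counting measure on the ancestors. -/
noncomputable def qSMC (γ q : (t : ℕ) → (Fin (t + 1) → E) → ℝ)
    (X : Fin (S + 1) → Fin N → E) (A : Fin S → Fin N → Fin N) : ℝ :=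
  (∏ i : Fin N, q 0 (ptraj X A 0 i)) *
    ∏ t ∈ Finset.Ico 1 (S + 1), ∏ i : Fin N,
      (wt γ q (t - 1) (ptraj X A (t - 1) (extA A (t - 1) i)) /
          (∑ j : Fin N, wt γ q (t - 1) (ptraj X A (t - 1) j)) *
        q t (ptraj X A t i))

/-- The SMC normalizing constant estimator `Ẑ_T = ∏_{t=1}^T (1/N) ∑_i w̃_t^i`. -/
noncomputable def Zhat (γ q : (t : ℕ) → (Fin (t + 1) → E) → ℝ)
    (X : Fin (S + 1) → Fin N → E) (A : Fin S → Fin N → Fin N) : ℝ :=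
  ∏ t ∈ Finset.range (S + 1), ((N : ℝ))⁻¹ * ∑ i : Fin N, wt γ q t (ptraj X A t i)

end SMCTut
namespace SMCTut

open MeasureTheory ENNReal

variable {E : Type*} [MeasurableSpace E] {N : ℕ}

section Nonneg

variable {γ q : (t : ℕ) → (Fin (t + 1) → E) → ℝ}

lemma gprev_nonneg (hγ : ∀ t x, 0 ≤ γ t x) : ∀ t (x : Fin (t + 1) → E), 0 ≤ gprev γ t x := by
  intro t x
  cases t with
  | zero => simp [gprev]
  | succ t => exact hγ t _

lemma wt_nonneg (hγ : ∀ t x, 0 ≤ γ t x) (hq : ∀ t x, 0 ≤ q t x) (t : ℕ)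
    (x : Fin (t + 1) → E) : 0 ≤ wt γ q t x :=
  div_nonneg (hγ t x) (mul_nonneg (gprev_nonneg hγ t x) (hq t x))

end Nonneg

/-- `traj` only depends on the values `X s` for `s ≤ t` and `A s` for `s < t`. -/
lemma traj_congr (X X' : ℕ → Fin N → E) (A A' : ℕ → Fin N → Fin N) (t : ℕ)
    (hX : ∀ s ≤ t, X s = X' s) (hA : ∀ s < t, A s = A' s) :
    traj X A t = traj X' A' t := by
  induction t with
  | zero => funext i s; simp [traj, hX 0 (le_refl 0)]
  | succ t ih =>
      funext i
      simp only [traj]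
      rw [hA t (Nat.lt_succ_self t), hX (t + 1) le_rfl,
        ih (fun s hs => hX s (hs.trans (Nat.le_succ t))) (fun s hs => hA s (hs.trans (Nat.lt_succ_self t)))]

section Ext

variable {S : ℕ}

lemma extX_snoc_lt (X' : Fin (S + 1) → Fin N → E) (y : Fin N → E) {t : ℕ} (ht : t < S + 1) :
    extX (Fin.snoc X' y) t = extX X' t := by
  have ht2 : t < S + 2 := ht.trans (Nat.lt_succ_self _)
  funext i
  show (if h : t < S + 2 then (Fin.snoc X' y : Fin (S + 2) → Fin N → E) ⟨t, h⟩ i else (Fin.snoc X' y : Fin (S + 2) → Fin N → E) 0 i)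
      = (if h : t < S + 1 then X' ⟨t, h⟩ i else X' 0 i)
  rw [dif_pos ht, dif_pos ht2]
  have h3 : (⟨t, ht2⟩ : Fin (S + 2)) = Fin.castSucc ⟨t, ht⟩ := rfl
  rw [h3, Fin.snoc_castSucc]

lemma extX_snoc_last (X' : Fin (S + 1) → Fin N → E) (y : Fin N → E) :
    extX (Fin.snoc X' y) (S + 1) = y := by
  funext i
  show (if h : S + 1 < S + 2 then (Fin.snoc X' y : Fin (S + 2) → Fin N → E) ⟨S + 1, h⟩ i else (Fin.snoc X' y : Fin (S + 2) → Fin N → E) 0 i) = y i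
  rw [dif_pos (Nat.lt_succ_self (S + 1))]
  have h3 : (⟨S + 1, Nat.lt_succ_self (S + 1)⟩ : Fin (S + 2)) = Fin.last (S + 1) := rfl
  rw [h3, Fin.snoc_last]

lemma extA_snoc_lt (A' : Fin S → Fin N → Fin N) (a : Fin N → Fin N) {t : ℕ} (ht : t < S) :
    extA (Fin.snoc A' a) t = extA A' t := by
  have ht2 : t < S + 1 := ht.trans (Nat.lt_succ_self _)
  funext i
  show (if h : t < S + 1 then (Fin.snoc A' a : Fin (S + 1) → Fin N → Fin N) ⟨t, h⟩ i else i)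
      = (if h : t < S then A' ⟨t, h⟩ i else i)
  rw [dif_pos ht, dif_pos ht2]
  have h3 : (⟨t, ht2⟩ : Fin (S + 1)) = Fin.castSucc ⟨t, ht⟩ := rfl
  rw [h3, Fin.snoc_castSucc]

lemma extA_snoc_last (A' : Fin S → Fin N → Fin N) (a : Fin N → Fin N) :
    extA (Fin.snoc A' a) S = a := by
  funext i
  show (if h : S < S + 1 then (Fin.snoc A' a : Fin (S + 1) → Fin N → Fin N) ⟨S, h⟩ i else i) = a i
  rw [dif_pos (Nat.lt_succ_self S)]
  have h3 : (⟨S, Nat.lt_succ_self S⟩ : Fin (S + 1)) = Fin.last S := rfl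
  rw [h3, Fin.snoc_last]

/-- Trajectories of the extended system agree with those of the original system
at times `t ≤ S`. -/
lemma ptraj_snoc_of_le (X' : Fin (S + 1) → Fin N → E) (y : Fin N → E)
    (A' : Fin S → Fin N → Fin N) (a : Fin N → Fin N) {t : ℕ} (ht : t ≤ S) :
    ptraj (Fin.snoc X' y) (Fin.snoc A' a) t = ptraj X' A' t := by
  unfold ptraj
  rw [traj_congr (extX (Fin.snoc X' y)) (extX X') (extA (Fin.snoc A' a)) (extA A') t
    (fun s hs => extX_snoc_lt X' y (Nat.lt_succ_of_le (hs.trans ht)))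
    (fun s hs => extA_snoc_lt A' a (lt_of_lt_of_le hs ht))]

lemma ptraj_snoc_top (X' : Fin (S + 1) → Fin N → E) (y : Fin N → E)
    (A' : Fin S → Fin N → Fin N) (a : Fin N → Fin N) (i : Fin N) :
    ptraj (Fin.snoc X' y) (Fin.snoc A' a) (S + 1) i
      = Fin.snoc (ptraj X' A' S (a i)) (y i) := by
  unfold ptraj
  simp only [traj]
  rw [extA_snoc_last, extX_snoc_last]
  have h1 := congrFun (ptraj_snoc_of_le X' y A' a le_rfl) (a i)
  unfold ptraj at h1
  rw [h1]

lemma ptraj_zero (X : Fin (S + 1) → Fin N → E) (A : Fin S → Fin N → Fin N) (i : Fin N) :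
    ptraj X A 0 i = fun _ => X 0 i := by
  funext s
  show extX X 0 i = X 0 i
  simp only [extX, dif_pos (Nat.succ_pos S)]
  rfl

end Ext

end SMCTut
namespace SMCTut

open MeasureTheory ENNReal

variable {E : Type*} [MeasurableSpace E] {N : ℕ}

section Meas

lemma measurable_snoc_const {n : ℕ} (z : Fin n → E) :
    Measurable (fun ξ : E => (Fin.snoc z ξ : Fin (n + 1) → E)) := by
  refine measurable_pi_iff.mpr fun k => ?_
  induction k using Fin.lastCases with
  | last => simpa [Fin.snoc_last] using measurable_id'
  | cast j => simpa [Fin.snoc_castSucc] using measurable_const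

lemma measurable_init {n : ℕ} :
    Measurable (fun x : Fin (n + 1) → E => Fin.init x) :=
  measurable_pi_iff.mpr fun j => measurable_pi_apply _

lemma measurable_gprev {γ : (t : ℕ) → (Fin (t + 1) → E) → ℝ} (t : ℕ)
    (hγ : ∀ s < t, Measurable (γ s)) : Measurable (gprev γ t) := by
  cases t with
  | zero => exact measurable_const
  | succ t => exact (hγ t (Nat.lt_succ_self t)).comp measurable_init

lemma measurable_wt {γ q : (t : ℕ) → (Fin (t + 1) → E) → ℝ} (t : ℕ)
    (hγ : ∀ s ≤ t, Measurable (γ s)) (hq : Measurable (q t)) : Measurable (wt γ q t) :=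
  (hγ t le_rfl).div ((measurable_gprev t fun s hs => hγ s hs.le).mul hq)

variable {S : ℕ}

lemma measurable_extX_apply (t : ℕ) (i : Fin N) :
    Measurable (fun X : Fin (S + 1) → Fin N → E => extX X t i) := by
  unfold extX
  split_ifs with h
  · exact (measurable_pi_apply i).comp (measurable_pi_apply _)
  · exact (measurable_pi_apply i).comp (measurable_pi_apply _)

lemma measurable_ptraj (A : Fin S → Fin N → Fin N) (t : ℕ) (i : Fin N) :
    Measurable (fun X : Fin (S + 1) → Fin N → E => ptraj X A t i) := by
  induction t generalizing i with
  | zero =>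
      refine measurable_pi_iff.mpr fun s => ?_
      show Measurable fun X => extX X 0 i
      exact measurable_extX_apply 0 i
  | succ t ih =>
      refine measurable_pi_iff.mpr fun k => ?_
      show Measurable fun X =>
        (Fin.snoc (traj (extX X) (extA A) t (extA A t i)) (extX X (t + 1) i) : Fin (t + 2) → E) k
      induction k using Fin.lastCases with
      | last => simpa [Fin.snoc_last] using measurable_extX_apply (t + 1) i
      | cast j =>
          simp only [Fin.snoc_castSucc]
          exact measurable_pi_iff.mp (ih (extA A t i)) j

lemma measurable_snoc_pair {β : Type*} [MeasurableSpace β] {n : ℕ} :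
    Measurable (fun p : β × (Fin (n + 1) → β) => (Fin.snoc p.2 p.1 : Fin (n + 2) → β)) := by
  refine measurable_pi_iff.mpr fun k => ?_
  induction k using Fin.lastCases with
  | last => simpa [Fin.snoc_last] using measurable_fst
  | cast j => simpa [Fin.snoc_castSucc, Function.comp_def] using (measurable_pi_apply j).comp measurable_snd

end Meas

/-- Tonelli for a product of single-coordinate functions over a finite product measure. -/
lemma lintegral_fin_pi_prod {α : Type*} [MeasurableSpace α] (m : Measure α) [SigmaFinite m] :
    ∀ {n : ℕ} (f : Fin n → α → ℝ≥0∞), (∀ i, Measurable (f i)) →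
    ∫⁻ x : Fin n → α, ∏ i, f i (x i) ∂(Measure.pi fun _ => m) = ∏ i, ∫⁻ ξ, f i ξ ∂m := by
  intro n
  induction n with
  | zero =>
      intro f hf
      simp only [Finset.univ_eq_empty, Finset.prod_empty]
      rw [lintegral_one, Measure.pi_empty_univ]
  | succ n ih =>
      intro f hf
      have hmp := measurePreserving_piFinSuccAbove (fun _ : Fin (n + 1) => m) 0
      set e := MeasurableEquiv.piFinSuccAbove (fun _ : Fin (n + 1) => α) 0
      have hg : Measurable fun p : α × (Fin n → α) => f 0 p.1 * ∏ j, f j.succ (p.2 j) :=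
        ((hf 0).comp measurable_fst).mul <|
          Finset.measurable_prod _ fun j _ => (hf j.succ).comp ((measurable_pi_apply j).comp measurable_snd)
      have h1 : ∀ x : Fin (n + 1) → α,
          (∏ i, f i (x i)) = f 0 ((e x).1) * ∏ j, f j.succ ((e x).2 j) := by
        intro x
        rw [Fin.prod_univ_succ]
        rfl
      calc ∫⁻ x : Fin (n + 1) → α, ∏ i, f i (x i) ∂(Measure.pi fun _ => m)
          = ∫⁻ x, (fun p : α × (Fin n → α) => f 0 p.1 * ∏ j, f j.succ (p.2 j)) (e x)
              ∂(Measure.pi fun _ => m) := by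
            refine lintegral_congr fun x => ?_
            exact h1 x
        _ = ∫⁻ p : α × (Fin n → α), f 0 p.1 * ∏ j, f j.succ (p.2 j)
              ∂(m.prod (Measure.pi fun _ => m)) := hmp.lintegral_comp hg
        _ = (∫⁻ ξ, f 0 ξ ∂m) * ∫⁻ y : Fin n → α, ∏ j, f j.succ (y j) ∂(Measure.pi fun _ => m) :=
            lintegral_prod_mul (hf 0).aemeasurable
              ((Finset.measurable_prod _ fun (j : Fin n) (_ : j ∈ Finset.univ) => (hf j.succ).comp (measurable_pi_apply j : Measurable fun y : Fin n → α => y j)).aemeasurable)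
        _ = (∫⁻ ξ, f 0 ξ ∂m) * ∏ j : Fin n, ∫⁻ ξ, f j.succ ξ ∂m := by
            rw [ih _ fun j => hf j.succ]
        _ = ∏ i, ∫⁻ ξ, f i ξ ∂m := (Fin.prod_univ_succ fun i => ∫⁻ ξ, f i ξ ∂m).symm

section ENNRealHelpers

lemma ofReal_div_sum {w : Fin N → ℝ} (hw : ∀ j, 0 ≤ w j) (i : Fin N) :
    ENNReal.ofReal (w i / ∑ j, w j) = ENNReal.ofReal (w i) / ∑ j, ENNReal.ofReal (w j) := by
  rcases eq_or_lt_of_le (Finset.sum_nonneg fun j _ => hw j) with h0 | hpos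
  · have hz : ∀ j ∈ Finset.univ, w j = 0 :=
      (Finset.sum_eq_zero_iff_of_nonneg fun j _ => hw j).mp h0.symm
    have : w i = 0 := hz i (Finset.mem_univ i)
    simp [this, ← h0]
  · rw [ENNReal.ofReal_div_of_pos hpos, ENNReal.ofReal_sum_of_nonneg fun j _ => hw j]

end ENNRealHelpers

end SMCTut
namespace SMCTut

set_option linter.unusedSectionVars false

open MeasureTheory ENNReal

variable {E : Type*} [MeasurableSpace E] {N : ℕ}

/-- ENNReal version of the `qSMC` density. -/
noncomputable def Qe (γ q : (t : ℕ) → (Fin (t + 1) → E) → ℝ) {S : ℕ}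
    (X : Fin (S + 1) → Fin N → E) (A : Fin S → Fin N → Fin N) : ℝ≥0∞ :=
  (∏ i : Fin N, ENNReal.ofReal (q 0 (ptraj X A 0 i))) *
    ∏ t ∈ Finset.Ico 1 (S + 1), ∏ i : Fin N,
      (ENNReal.ofReal (wt γ q (t - 1) (ptraj X A (t - 1) (extA A (t - 1) i))) /
          (∑ j : Fin N, ENNReal.ofReal (wt γ q (t - 1) (ptraj X A (t - 1) j))) *
        ENNReal.ofReal (q t (ptraj X A t i)))

/-- ENNReal version of the full integrand, with a general final-weight numerator `G`. -/
noncomputable def Fe (γ q : (t : ℕ) → (Fin (t + 1) → E) → ℝ) {S : ℕ}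
    (G : (Fin (S + 1) → E) → ℝ≥0∞)
    (X : Fin (S + 1) → Fin N → E) (A : Fin S → Fin N → Fin N) : ℝ≥0∞ :=
  (∏ t ∈ Finset.range S, ((N : ℝ≥0∞))⁻¹ * ∑ j : Fin N, ENNReal.ofReal (wt γ q t (ptraj X A t j))) *
    (((N : ℝ≥0∞))⁻¹ * ∑ i : Fin N, G (ptraj X A S i) /
        ENNReal.ofReal (gprev γ S (ptraj X A S i) * q S (ptraj X A S i))) *
    Qe γ q X A

section Conv

variable {γ q : (t : ℕ) → (Fin (t + 1) → E) → ℝ}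

lemma ofReal_wt (hγn : ∀ t x, 0 ≤ γ t x) (hqn : ∀ t x, 0 ≤ q t x) {t : ℕ}
    (hsupp : ∀ x : Fin (t + 1) → E, 0 < γ t x → 0 < gprev γ t x * q t x)
    (x : Fin (t + 1) → E) :
    ENNReal.ofReal (wt γ q t x)
      = ENNReal.ofReal (γ t x) / ENNReal.ofReal (gprev γ t x * q t x) := by
  rcases eq_or_lt_of_le (mul_nonneg (gprev_nonneg hγn t x) (hqn t x)) with hd | hd
  · have hγ0 : γ t x = 0 := by
      by_contra h
      exact absurd (hsupp x (lt_of_le_of_ne (hγn t x) (Ne.symm h))) (by rw [← hd]; exact lt_irrefl 0)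
    simp [wt, hγ0]
  · rw [wt, ENNReal.ofReal_div_of_pos hd]

lemma ofReal_natInv (hN : 1 ≤ N) : ENNReal.ofReal ((N : ℝ))⁻¹ = ((N : ℝ≥0∞))⁻¹ := by
  rw [ENNReal.ofReal_inv_of_pos (by exact_mod_cast Nat.lt_of_lt_of_le Nat.zero_lt_one hN),
    ENNReal.ofReal_natCast]

lemma ofReal_qSMC (hγn : ∀ t x, 0 ≤ γ t x) (hqn : ∀ t x, 0 ≤ q t x) {S : ℕ}
    (X : Fin (S + 1) → Fin N → E) (A : Fin S → Fin N → Fin N) :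
    ENNReal.ofReal (qSMC γ q X A) = Qe γ q X A := by
  unfold qSMC Qe
  rw [ENNReal.ofReal_mul (Finset.prod_nonneg fun i _ => hqn 0 _),
    ENNReal.ofReal_prod_of_nonneg (fun i _ => hqn 0 _),
    ENNReal.ofReal_prod_of_nonneg]
  · congr 1
    refine Finset.prod_congr rfl fun t _ => ?_
    rw [ENNReal.ofReal_prod_of_nonneg]
    · refine Finset.prod_congr rfl fun i _ => ?_
      rw [ENNReal.ofReal_mul (div_nonneg (wt_nonneg hγn hqn _ _) (Finset.sum_nonneg fun j _ => wt_nonneg hγn hqn _ _)),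
        ofReal_div_sum (fun j => wt_nonneg hγn hqn _ _)]
    · exact fun i _ => mul_nonneg (div_nonneg (wt_nonneg hγn hqn _ _)
        (Finset.sum_nonneg fun j _ => wt_nonneg hγn hqn _ _)) (hqn _ _)
  · exact fun t _ => Finset.prod_nonneg fun i _ => mul_nonneg (div_nonneg (wt_nonneg hγn hqn _ _)
      (Finset.sum_nonneg fun j _ => wt_nonneg hγn hqn _ _)) (hqn _ _)

lemma ofReal_wsum (hγn : ∀ t x, 0 ≤ γ t x) (hqn : ∀ t x, 0 ≤ q t x) (hN : 1 ≤ N) {S : ℕ}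
    (X : Fin (S + 1) → Fin N → E) (A : Fin S → Fin N → Fin N) (t : ℕ) :
    ENNReal.ofReal (((N : ℝ))⁻¹ * ∑ i : Fin N, wt γ q t (ptraj X A t i))
      = ((N : ℝ≥0∞))⁻¹ * ∑ i : Fin N, ENNReal.ofReal (wt γ q t (ptraj X A t i)) := by
  rw [ENNReal.ofReal_mul (inv_nonneg.mpr (Nat.cast_nonneg N)), ofReal_natInv hN,
    ENNReal.ofReal_sum_of_nonneg fun i _ => wt_nonneg hγn hqn _ _]

lemma ofReal_Zhat_mul_qSMC (hγn : ∀ t x, 0 ≤ γ t x) (hqn : ∀ t x, 0 ≤ q t x) (hN : 1 ≤ N) {S : ℕ}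
    (hsupp : ∀ x : Fin (S + 1) → E, 0 < γ S x → 0 < gprev γ S x * q S x)
    (X : Fin (S + 1) → Fin N → E) (A : Fin S → Fin N → Fin N) :
    ENNReal.ofReal (Zhat γ q X A * qSMC γ q X A)
      = Fe γ q (fun x => ENNReal.ofReal (γ S x)) X A := by
  have hZnn : ∀ t, 0 ≤ ((N : ℝ))⁻¹ * ∑ i : Fin N, wt γ q t (ptraj X A t i) := fun t =>
    mul_nonneg (inv_nonneg.mpr (Nat.cast_nonneg N)) (Finset.sum_nonneg fun i _ => wt_nonneg hγn hqn _ _)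
  have hZh : 0 ≤ Zhat γ q X A := Finset.prod_nonneg fun t _ => hZnn t
  rw [ENNReal.ofReal_mul hZh, ofReal_qSMC hγn hqn]
  unfold Zhat Fe
  rw [Finset.prod_range_succ, ENNReal.ofReal_mul (Finset.prod_nonneg fun t _ => hZnn t),
    ENNReal.ofReal_prod_of_nonneg fun t _ => hZnn t]
  congr 1
  congr 1
  · exact Finset.prod_congr rfl fun t _ => ofReal_wsum hγn hqn hN X A t
  · rw [ofReal_wsum hγn hqn hN X A S]
    congr 1
    exact Finset.sum_congr rfl fun i _ => ofReal_wt hγn hqn hsupp _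

end Conv

section MeasFe

variable {γ q : (t : ℕ) → (Fin (t + 1) → E) → ℝ} {S : ℕ}

lemma measurable_wsum_e (A : Fin S → Fin N → Fin N)
    (hγme : ∀ s ≤ S, Measurable (γ s)) (hqme : ∀ s ≤ S, Measurable (q s))
    {t : ℕ} (ht : t ≤ S) :
    Measurable (fun X : Fin (S + 1) → Fin N → E =>
      ∑ j : Fin N, ENNReal.ofReal (wt γ q t (ptraj X A t j))) := by
  refine Finset.measurable_sum _ fun j _ => ?_
  exact ((measurable_wt t (fun s hs => hγme s (hs.trans ht)) (hqme t ht)).comp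
    (measurable_ptraj A t j)).ennreal_ofReal

lemma measurable_Qe (A : Fin S → Fin N → Fin N)
    (hγme : ∀ s ≤ S, Measurable (γ s)) (hqme : ∀ s ≤ S, Measurable (q s)) :
    Measurable (fun X : Fin (S + 1) → Fin N → E => Qe γ q X A) := by
  unfold Qe
  refine Measurable.mul ?_ ?_
  · exact Finset.measurable_prod _ fun i _ =>
      ((hqme 0 (Nat.zero_le S)).comp (measurable_ptraj A 0 i)).ennreal_ofReal
  · refine Finset.measurable_prod _ fun t ht => ?_
    obtain ⟨ht1, ht2⟩ := Finset.mem_Ico.mp ht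
    have ht1' : t - 1 ≤ S := le_trans (Nat.sub_le t 1) (Nat.lt_succ_iff.mp ht2)
    refine Finset.measurable_prod _ fun i _ => ?_
    refine Measurable.mul (Measurable.div ?_ ?_) ?_
    · exact ((measurable_wt (t - 1) (fun s hs => hγme s (hs.trans ht1')) (hqme _ ht1')).comp
        (measurable_ptraj A (t - 1) _)).ennreal_ofReal
    · exact measurable_wsum_e A hγme hqme ht1'
    · exact ((hqme t (Nat.lt_succ_iff.mp ht2)).comp (measurable_ptraj A t i)).ennreal_ofReal

lemma measurable_Fe (A : Fin S → Fin N → Fin N) {G : (Fin (S + 1) → E) → ℝ≥0∞}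
    (hγme : ∀ s ≤ S, Measurable (γ s)) (hqme : ∀ s ≤ S, Measurable (q s))
    (hG : Measurable G) :
    Measurable (fun X : Fin (S + 1) → Fin N → E => Fe γ q G X A) := by
  unfold Fe
  refine Measurable.mul (Measurable.mul ?_ ?_) (measurable_Qe A hγme hqme)
  · refine Finset.measurable_prod _ fun t ht => ?_
    exact (measurable_const.mul (measurable_wsum_e A hγme hqme (Finset.mem_range.mp ht).le))
  · refine Measurable.mul measurable_const ?_
    refine Finset.measurable_sum _ fun i _ => ?_
    refine Measurable.div (hG.comp (measurable_ptraj A S i)) ?_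
    exact (((measurable_gprev S fun s hs => hγme s hs.le).mul (hqme S le_rfl)).comp
      (measurable_ptraj A S i)).ennreal_ofReal

lemma measurable_Zhat_mul_qSMC (A : Fin S → Fin N → Fin N)
    (hγme : ∀ s ≤ S, Measurable (γ s)) (hqme : ∀ s ≤ S, Measurable (q s)) :
    Measurable (fun X : Fin (S + 1) → Fin N → E => Zhat γ q X A * qSMC γ q X A) := by
  refine Measurable.mul ?_ ?_
  · unfold Zhat
    refine Finset.measurable_prod _ fun t ht => ?_
    have ht' : t ≤ S := Nat.lt_succ_iff.mp (Finset.mem_range.mp ht)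
    refine measurable_const.mul (Finset.measurable_sum _ fun i _ => ?_)
    exact (measurable_wt t (fun s hs => hγme s (hs.trans ht')) (hqme t ht')).comp
      (measurable_ptraj A t i)
  · unfold qSMC
    refine Measurable.mul ?_ ?_
    · exact Finset.measurable_prod _ fun i _ =>
        (hqme 0 (Nat.zero_le S)).comp (measurable_ptraj A 0 i)
    · refine Finset.measurable_prod _ fun t ht => ?_
      obtain ⟨ht1, ht2⟩ := Finset.mem_Ico.mp ht
      have ht1' : t - 1 ≤ S := le_trans (Nat.sub_le t 1) (Nat.lt_succ_iff.mp ht2)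
      refine Finset.measurable_prod _ fun i _ => ?_
      refine Measurable.mul (Measurable.div ?_ ?_) ?_
      · exact (measurable_wt (t - 1) (fun s hs => hγme s (hs.trans ht1')) (hqme _ ht1')).comp
          (measurable_ptraj A (t - 1) _)
      · exact Finset.measurable_sum _ fun j _ =>
          (measurable_wt (t - 1) (fun s hs => hγme s (hs.trans ht1')) (hqme _ ht1')).comp
            (measurable_ptraj A (t - 1) j)
      · exact (hqme t (Nat.lt_succ_iff.mp ht2)).comp (measurable_ptraj A t i)

end MeasFe

end SMCTut
namespace SMCTut

set_option linter.unusedSectionVars false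
set_option maxHeartbeats 1000000

open MeasureTheory ENNReal

variable {E : Type*} [MeasurableSpace E] {N : ℕ}

/-- Peeling off the last coordinate of a finite product measure (Tonelli). -/
lemma lintegral_pi_snoc {α : Type*} [MeasurableSpace α] (m : Measure α) [SigmaFinite m]
    {n : ℕ} (f : (Fin (n + 1 + 1) → α) → ℝ≥0∞) (hf : Measurable f) :
    ∫⁻ x, f x ∂(Measure.pi fun _ : Fin (n + 1 + 1) => m)
      = ∫⁻ x' : Fin (n + 1) → α, ∫⁻ u, f (Fin.snoc x' u) ∂m
          ∂(Measure.pi fun _ : Fin (n + 1) => m) := by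
  have hmp := measurePreserving_piFinSuccAbove (fun _ : Fin (n + 1 + 1) => m) (Fin.last (n + 1))
  set e := MeasurableEquiv.piFinSuccAbove (fun _ : Fin (n + 1 + 1) => α) (Fin.last (n + 1))
  have hsymm : ∀ p : α × (Fin (n + 1) → α), e.symm p = Fin.snoc p.2 p.1 := by
    intro p
    show (Fin.insertNthEquiv (fun _ => α) (Fin.last (n + 1))) p = _
    rw [Fin.insertNthEquiv_last]
    rfl
  have hfe : Measurable fun p : α × (Fin (n + 1) → α) => f (Fin.snoc p.2 p.1) :=
    hf.comp measurable_snoc_pair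
  calc ∫⁻ x, f x ∂(Measure.pi fun _ : Fin (n + 1 + 1) => m)
      = ∫⁻ x, (fun p : α × (Fin (n + 1) → α) => f (Fin.snoc p.2 p.1)) (e x)
          ∂(Measure.pi fun _ : Fin (n + 1 + 1) => m) := by
        refine lintegral_congr fun x => ?_
        simp only
        rw [show (Fin.snoc (e x).2 (e x).1 : Fin (n + 1 + 1) → α) = e.symm (e x) from
          (hsymm (e x)).symm, e.symm_apply_apply]
    _ = ∫⁻ p : α × (Fin (n + 1) → α), f (Fin.snoc p.2 p.1)
          ∂(m.prod (Measure.pi fun _ : Fin (n + 1) => m)) := hmp.lintegral_comp hfe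
    _ = ∫⁻ x' : Fin (n + 1) → α, ∫⁻ u, f (Fin.snoc x' u) ∂m
          ∂(Measure.pi fun _ : Fin (n + 1) => m) :=
        lintegral_prod_symm _ hfe.aemeasurable

section Crux

variable (μ : Measure E) [SigmaFinite μ]
variable {γ q : (t : ℕ) → (Fin (t + 1) → E) → ℝ}

/-- The transition density integrates to one, in `ℝ≥0∞` form. -/
lemma lintegral_ofReal_qsnoc {t : ℕ} (hqme : Measurable (q (t + 1)))
    (hqn : ∀ x, 0 ≤ q (t + 1) x)
    (hqprob : ∀ x : Fin (t + 1) → E, ∫ ξ, q (t + 1) (Fin.snoc x ξ) ∂μ = 1)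
    (x : Fin (t + 1) → E) :
    ∫⁻ ξ, ENNReal.ofReal (q (t + 1) (Fin.snoc x ξ)) ∂μ = 1 := by
  have hm : Measurable fun ξ => q (t + 1) (Fin.snoc x ξ) := hqme.comp (measurable_snoc_const x)
  have hint : Integrable (fun ξ => q (t + 1) (Fin.snoc x ξ)) μ := by
    by_contra h
    have h1 := hqprob x
    rw [integral_undef h] at h1
    exact one_ne_zero h1.symm
  rw [← ofReal_integral_eq_lintegral_ofReal hint (Filter.Eventually.of_forall fun ξ => hqn _),
    hqprob x, ENNReal.ofReal_one]

lemma ennreal_div_mul_div_cancel {a b G : ℝ≥0∞} (ha0 : a ≠ 0) (hat : a ≠ ∞) :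
    a / b * (G / a) = G / b := by
  rw [ENNReal.div_eq_inv_mul, ENNReal.div_eq_inv_mul, ENNReal.div_eq_inv_mul]
  calc b⁻¹ * a * (a⁻¹ * G) = b⁻¹ * (a * a⁻¹) * G := by ring
    _ = b⁻¹ * G := by rw [ENNReal.mul_inv_cancel ha0 hat, mul_one]

lemma ennreal_div_mul_cancel_right {oc oq G : ℝ≥0∞} (hq0 : oq ≠ 0) (hqt : oq ≠ ∞) :
    G / (oc * oq) * oq = G / oc := by
  rw [ENNReal.div_eq_inv_mul, ENNReal.div_eq_inv_mul,
    ENNReal.mul_inv (Or.inr hqt) (Or.inr hq0)]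
  calc oc⁻¹ * oq⁻¹ * G * oq = oc⁻¹ * G * (oq⁻¹ * oq) := by ring
    _ = oc⁻¹ * G := by rw [ENNReal.inv_mul_cancel hq0 hqt, mul_one]

/-- Pointwise: the transition density cancels against the denominator of the weight. -/
lemma weight_cancel_pointwise {c qv : ℝ} (hc : 0 ≤ c) (hqv : 0 ≤ qv) {g : ℝ≥0∞}
    (hgsupp : g ≠ 0 → 0 < c * qv) :
    g / ENNReal.ofReal (c * qv) * ENNReal.ofReal qv = g / ENNReal.ofReal c := by
  by_cases hg : g = 0
  · simp [hg]
  · have hpos := hgsupp hg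
    have hqpos : 0 < qv := lt_of_le_of_ne hqv (by rintro rfl; simp at hpos)
    rw [ENNReal.ofReal_mul hc]
    exact ennreal_div_mul_cancel_right (by simp [hqpos]) ofReal_ne_top

/-- Pointwise: merging the resampling weight with the integrated future weight. -/
lemma weight_merge_pointwise {gam d : ℝ} (hgam : 0 ≤ gam) (hd : 0 ≤ d)
    (hsupp : 0 < gam → 0 < d) (Gbar : ℝ≥0∞) (hGbar : Gbar ≠ 0 → 0 < gam) :
    ENNReal.ofReal (gam / d) * (Gbar / ENNReal.ofReal gam) = Gbar / ENNReal.ofReal d := by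
  by_cases hG : Gbar = 0
  · simp [hG]
  · have hgpos : 0 < gam := hGbar hG
    have hdpos : 0 < d := hsupp hgpos
    rw [ENNReal.ofReal_div_of_pos hdpos]
    exact ennreal_div_mul_div_cancel (by simp [hgpos]) ofReal_ne_top

end Crux

end SMCTut
namespace SMCTut

set_option linter.unusedSectionVars false
set_option maxHeartbeats 1000000

open MeasureTheory ENNReal

variable {E : Type*} [MeasurableSpace E] {N : ℕ}

section Crux2

variable (μ : Measure E) [SigmaFinite μ]
variable {γ q : (t : ℕ) → (Fin (t + 1) → E) → ℝ} {S : ℕ}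

/-- The key one-step computation: summing over the new ancestor indices and integrating
out the new particle positions. -/
lemma crux (hN : 1 ≤ N)
    (hγn : ∀ t x, 0 ≤ γ t x) (hqn : ∀ t x, 0 ≤ q t x)
    (hqme : Measurable (q (S + 1)))
    (hqprob : ∀ x : Fin (S + 1) → E, ∫ ξ, q (S + 1) (Fin.snoc x ξ) ∂μ = 1)
    (hsuppS : ∀ x : Fin (S + 1) → E, 0 < γ S x → 0 < gprev γ S x * q S x)
    (G : (Fin (S + 2) → E) → ℝ≥0∞) (hG : Measurable G)
    (hGsupp : ∀ y : Fin (S + 2) → E, G y ≠ 0 → 0 < gprev γ (S + 1) y * q (S + 1) y)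
    (z : Fin N → (Fin (S + 1) → E)) :
    ∑ a : Fin N → Fin N, ∫⁻ y : Fin N → E,
        (((N : ℝ≥0∞))⁻¹ * ∑ j : Fin N, ENNReal.ofReal (wt γ q S (z j))) *
          ((((N : ℝ≥0∞))⁻¹ * ∑ i : Fin N, G (Fin.snoc (z (a i)) (y i)) /
              ENNReal.ofReal (gprev γ (S + 1) (Fin.snoc (z (a i)) (y i)) *
                q (S + 1) (Fin.snoc (z (a i)) (y i)))) *
            ∏ k : Fin N, (ENNReal.ofReal (wt γ q S (z (a k))) /
                (∑ j : Fin N, ENNReal.ofReal (wt γ q S (z j))) *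
              ENNReal.ofReal (q (S + 1) (Fin.snoc (z (a k)) (y k)))))
        ∂(Measure.pi fun _ : Fin N => μ)
      = ((N : ℝ≥0∞))⁻¹ * ∑ b : Fin N, (∫⁻ ξ, G (Fin.snoc (z b) ξ) ∂μ) /
          ENNReal.ofReal (gprev γ S (z b) * q S (z b)) := by
  have hNpos : (0 : ℕ) < N := Nat.lt_of_lt_of_le Nat.zero_lt_one hN
  -- notation
  set ww : Fin N → ℝ≥0∞ := fun b => ENNReal.ofReal (wt γ q S (z b)) with hww
  set W : ℝ≥0∞ := ∑ j : Fin N, ww j with hWdef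
  have hWt : W ≠ ∞ := ENNReal.sum_ne_top.mpr fun b _ => ofReal_ne_top
  set qf : Fin N → E → ℝ≥0∞ := fun b ξ => ENNReal.ofReal (q (S + 1) (Fin.snoc (z b) ξ))
    with hqf
  -- rewrite gprev at time S+1
  have hgprev : ∀ (b : Fin N) (ξ : E),
      gprev γ (S + 1) (Fin.snoc (z b) ξ) = γ S (z b) := by
    intro b ξ
    simp only [gprev]
    rw [Fin.init_snoc]
  simp only [hgprev]
  set v : Fin N → E → ℝ≥0∞ := fun b ξ => G (Fin.snoc (z b) ξ) /
      ENNReal.ofReal (γ S (z b) * q (S + 1) (Fin.snoc (z b) ξ)) with hv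
  set Gbar : Fin N → ℝ≥0∞ := fun b => ∫⁻ ξ, G (Fin.snoc (z b) ξ) ∂μ with hGbar
  set g : Fin N → ℝ≥0∞ := fun b => Gbar b / ENNReal.ofReal (γ S (z b)) with hg
  -- measurability
  have hqfme : ∀ b, Measurable (qf b) := fun b =>
    (hqme.comp (measurable_snoc_const (z b))).ennreal_ofReal
  have hGme : ∀ b, Measurable fun ξ => G (Fin.snoc (z b) ξ) := fun b =>
    hG.comp (measurable_snoc_const (z b))
  have hvme : ∀ b, Measurable (v b) := fun b =>
    (hGme b).div (measurable_const.mul (hqme.comp (measurable_snoc_const (z b)))).ennreal_ofReal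
  -- the support facts
  have hsupp1 : ∀ b ξ, G (Fin.snoc (z b) ξ) ≠ 0 →
      0 < γ S (z b) * q (S + 1) (Fin.snoc (z b) ξ) := by
    intro b ξ h
    have := hGsupp (Fin.snoc (z b) ξ) h
    rwa [hgprev b ξ] at this
  have hγ0_Gbar : ∀ b, γ S (z b) = 0 → Gbar b = 0 := by
    intro b hb
    have hz : ∀ ξ, G (Fin.snoc (z b) ξ) = 0 := by
      intro ξ
      by_contra h
      have := hsupp1 b ξ h
      rw [hb, zero_mul] at this
      exact lt_irrefl 0 this
    rw [hGbar]
    simp only [hz]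
    exact lintegral_zero
  have hww0_γ : ∀ b, ww b = 0 → γ S (z b) = 0 := by
    intro b hb
    by_contra h
    have hγpos : 0 < γ S (z b) := lt_of_le_of_ne (hγn S (z b)) (Ne.symm h)
    have hdpos := hsuppS (z b) hγpos
    have : 0 < wt γ q S (z b) := div_pos hγpos hdpos
    rw [hww] at hb
    simp only [ENNReal.ofReal_eq_zero] at hb
    exact absurd hb (not_le.mpr this)
  -- the integral of qf is 1
  have hqf1 : ∀ b, ∫⁻ ξ, qf b ξ ∂μ = 1 := fun b =>
    lintegral_ofReal_qsnoc μ hqme (hqn (S + 1)) hqprob (z b)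
  -- the integral of v * qf
  have hvqf : ∀ b, ∫⁻ ξ, v b ξ * qf b ξ ∂μ = g b := by
    intro b
    have hpt : ∀ ξ, v b ξ * qf b ξ = G (Fin.snoc (z b) ξ) / ENNReal.ofReal (γ S (z b)) :=
      fun ξ => weight_cancel_pointwise (hγn S (z b)) (hqn (S + 1) _) (hsupp1 b ξ)
    rw [lintegral_congr hpt]
    simp only [div_eq_mul_inv]
    rw [lintegral_mul_const _ (hGme b)]
    rw [hg, hGbar]
    simp [div_eq_mul_inv]
  -- merge weights
  have hmerge : ∀ b, ww b * g b
      = Gbar b / ENNReal.ofReal (gprev γ S (z b) * q S (z b)) := by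
    intro b
    refine weight_merge_pointwise (hγn S (z b))
      (mul_nonneg (gprev_nonneg hγn S (z b)) (hqn S (z b))) (hsuppS (z b)) (Gbar b) ?_
    intro h
    by_contra h2
    have : γ S (z b) = 0 := le_antisymm (not_lt.mp h2) (hγn S (z b))
    exact h (hγ0_Gbar b this)
  by_cases hW0 : W = 0
  -- degenerate case: all weights vanish
  · have hwz : ∀ b, ww b = 0 := by
      intro b
      have := (Finset.sum_eq_zero_iff).mp hW0
      exact this b (Finset.mem_univ b)
    have hRHS : ∀ b, Gbar b / ENNReal.ofReal (gprev γ S (z b) * q S (z b)) = 0 := by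
      intro b
      rw [hγ0_Gbar b (hww0_γ b (hwz b))]
      exact ENNReal.zero_div
    have hLHS : ∀ a : Fin N → Fin N, ∀ y : Fin N → E,
        (∏ k : Fin N, (ww (a k) / W * qf (a k) (y k))) = 0 := by
      intro a y
      refine Finset.prod_eq_zero (Finset.mem_univ (⟨0, hNpos⟩ : Fin N)) ?_
      rw [hwz, ENNReal.zero_div, zero_mul]
    calc ∑ a : Fin N → Fin N, ∫⁻ y : Fin N → E,
          (((N : ℝ≥0∞))⁻¹ * W) *
            ((((N : ℝ≥0∞))⁻¹ * ∑ i : Fin N, v (a i) (y i)) *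
              ∏ k : Fin N, (ww (a k) / W * qf (a k) (y k)))
          ∂(Measure.pi fun _ : Fin N => μ)
        = ∑ a : Fin N → Fin N, ∫⁻ _y : Fin N → E, 0 ∂(Measure.pi fun _ : Fin N => μ) := by
          refine Finset.sum_congr rfl fun a _ => lintegral_congr fun y => ?_
          rw [hLHS a y, mul_zero, mul_zero]
      _ = 0 := by simp
      _ = ((N : ℝ≥0∞))⁻¹ * ∑ b : Fin N, Gbar b /
            ENNReal.ofReal (gprev γ S (z b) * q S (z b)) := by
          simp only [hRHS, Finset.sum_const_zero, mul_zero]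
  -- main case: positive weight sum
  · have hWW : ∑ b : Fin N, ww b / W = 1 := by
      simp only [div_eq_mul_inv, ← Finset.sum_mul]
      exact ENNReal.mul_inv_cancel hW0 hWt
    have hNne : ((N : ℝ≥0∞)) ≠ 0 := Nat.cast_ne_zero.mpr (by omega)
    have hN1 : ((N : ℝ≥0∞))⁻¹ * (N : ℝ≥0∞) = 1 :=
      ENNReal.inv_mul_cancel hNne (natCast_ne_top N)
    -- inner integral for a fixed assignment of ancestors
    have hterm : ∀ (a : Fin N → Fin N) (i : Fin N),
        ∫⁻ y : Fin N → E, v (a i) (y i) * ∏ k : Fin N, qf (a k) (y k)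
            ∂(Measure.pi fun _ : Fin N => μ) = g (a i) := by
      intro a i
      classical
      set F : Fin N → E → ℝ≥0∞ :=
        fun k => if k = i then (fun ξ => v (a i) ξ * qf (a i) ξ) else qf (a k) with hF
      have hFme : ∀ k, Measurable (F k) := by
        intro k
        rw [hF]
        by_cases h : k = i
        · simpa [h, Pi.mul_def] using (hvme (a i)).mul (hqfme (a i))
        · simpa [h] using hqfme (a k)
      have hpt : ∀ y : Fin N → E,
          v (a i) (y i) * ∏ k : Fin N, qf (a k) (y k) = ∏ k : Fin N, F k (y k) := by
        intro y
        have hFi : F i (y i) = v (a i) (y i) * qf (a i) (y i) := by simp [hF]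
        have h2 : ∀ k ∈ Finset.univ.erase i, F k (y k) = qf (a k) (y k) := by
          intro k hk
          have hne : k ≠ i := (Finset.mem_erase.mp hk).1
          simp [hF, hne]
        calc v (a i) (y i) * ∏ k : Fin N, qf (a k) (y k)
            = v (a i) (y i) * (qf (a i) (y i) *
                ∏ k ∈ Finset.univ.erase i, qf (a k) (y k)) := by
              rw [Finset.mul_prod_erase Finset.univ (fun k => qf (a k) (y k))
                (Finset.mem_univ i)]
          _ = F i (y i) * ∏ k ∈ Finset.univ.erase i, F k (y k) := by
              rw [hFi, Finset.prod_congr rfl h2]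
              ring
          _ = ∏ k : Fin N, F k (y k) :=
              Finset.mul_prod_erase Finset.univ (fun k => F k (y k)) (Finset.mem_univ i)
      rw [lintegral_congr hpt, lintegral_fin_pi_prod μ F hFme,
        ← Finset.mul_prod_erase Finset.univ (fun k => ∫⁻ ξ, F k ξ ∂μ) (Finset.mem_univ i)]
      have h2 : ∫⁻ ξ, F i ξ ∂μ = g (a i) := by
        have : F i = fun ξ => v (a i) ξ * qf (a i) ξ := by simp [hF]
        rw [this]
        exact hvqf (a i)
      have h3 : ∀ k ∈ Finset.univ.erase i, ∫⁻ ξ, F k ξ ∂μ = 1 := by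
        intro k hk
        have hne : k ≠ i := (Finset.mem_erase.mp hk).1
        have : F k = qf (a k) := by simp [hF, hne]
        rw [this]
        exact hqf1 (a k)
      rw [h2, Finset.prod_congr rfl h3, Finset.prod_const_one, mul_one]
    have hInner : ∀ a : Fin N → Fin N,
        ∫⁻ y : Fin N → E, (((N : ℝ≥0∞))⁻¹ * W) *
            ((((N : ℝ≥0∞))⁻¹ * ∑ i : Fin N, v (a i) (y i)) *
              ∏ k : Fin N, (ww (a k) / W * qf (a k) (y k)))
            ∂(Measure.pi fun _ : Fin N => μ)
          = ((((N : ℝ≥0∞))⁻¹ * W) * (((N : ℝ≥0∞))⁻¹ * ∏ k : Fin N, (ww (a k) / W))) *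
              ∑ i : Fin N, g (a i) := by
      intro a
      have h1 : ∀ y : Fin N → E, (((N : ℝ≥0∞))⁻¹ * W) *
            ((((N : ℝ≥0∞))⁻¹ * ∑ i : Fin N, v (a i) (y i)) *
              ∏ k : Fin N, (ww (a k) / W * qf (a k) (y k)))
          = ((((N : ℝ≥0∞))⁻¹ * W) * (((N : ℝ≥0∞))⁻¹ * ∏ k : Fin N, (ww (a k) / W))) *
              ∑ i : Fin N, (v (a i) (y i) * ∏ k : Fin N, qf (a k) (y k)) := by
        intro y
        rw [Finset.prod_mul_distrib, ← Finset.sum_mul]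
        ring
      rw [lintegral_congr h1, lintegral_const_mul _ ?hme, lintegral_finset_sum]
      · congr 1
        exact Finset.sum_congr rfl fun i _ => hterm a i
      · intro i _
        exact ((hvme (a i)).comp (measurable_pi_apply i)).mul
          (Finset.measurable_prod _ fun k _ => (hqfme (a k)).comp (measurable_pi_apply k))
      case hme =>
        refine Finset.measurable_sum _ fun i _ => ?_
        exact ((hvme (a i)).comp (measurable_pi_apply i)).mul
          (Finset.measurable_prod _ fun k _ => (hqfme (a k)).comp (measurable_pi_apply k))
    -- sum over ancestor assignments
    have hsum : ∀ i : Fin N,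
        ∑ a : Fin N → Fin N, (∏ k : Fin N, (ww (a k) / W)) * g (a i)
          = ∑ b : Fin N, (ww b / W) * g b := by
      intro i
      classical
      set h : Fin N → Fin N → ℝ≥0∞ := fun k b => (ww b / W) * (if k = i then g b else 1)
        with hh
      have hpt : ∀ a : Fin N → Fin N,
          (∏ k : Fin N, (ww (a k) / W)) * g (a i) = ∏ k : Fin N, h k (a k) := by
        intro a
        rw [← Finset.mul_prod_erase Finset.univ (fun k => h k (a k)) (Finset.mem_univ i),
          ← Finset.mul_prod_erase Finset.univ (fun k => ww (a k) / W) (Finset.mem_univ i)]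
        have h1 : h i (a i) = ww (a i) / W * g (a i) := by simp [hh]
        have h2 : ∀ k ∈ Finset.univ.erase i, h k (a k) = ww (a k) / W := by
          intro k hk
          have hne : k ≠ i := (Finset.mem_erase.mp hk).1
          simp [hh, hne]
        rw [h1, Finset.prod_congr rfl h2]
        ring
      calc ∑ a : Fin N → Fin N, (∏ k : Fin N, (ww (a k) / W)) * g (a i)
          = ∑ a : Fin N → Fin N, ∏ k : Fin N, h k (a k) := Finset.sum_congr rfl fun a _ => hpt a
        _ = ∏ k : Fin N, ∑ b : Fin N, h k b := (Fintype.prod_sum h).symm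
        _ = (∑ b : Fin N, h i b) * ∏ k ∈ Finset.univ.erase i, ∑ b : Fin N, h k b :=
            (Finset.mul_prod_erase Finset.univ (fun k => ∑ b : Fin N, h k b)
              (Finset.mem_univ i)).symm
        _ = ∑ b : Fin N, (ww b / W) * g b := by
            have h1 : ∑ b : Fin N, h i b = ∑ b : Fin N, (ww b / W) * g b := by
              refine Finset.sum_congr rfl fun b _ => ?_
              simp [hh]
            have h2 : ∀ k ∈ Finset.univ.erase i, (∑ b : Fin N, h k b) = 1 := by
              intro k hk
              have hne : k ≠ i := (Finset.mem_erase.mp hk).1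
              have : ∀ b : Fin N, h k b = ww b / W := by intro b; simp [hh, hne]
              rw [Finset.sum_congr rfl fun b _ => this b]
              exact hWW
            rw [h1, Finset.prod_congr rfl h2, Finset.prod_const_one, mul_one]
    have hWsum : W * ∑ b : Fin N, (ww b / W) * g b = ∑ b : Fin N, ww b * g b := by
      rw [Finset.mul_sum]
      refine Finset.sum_congr rfl fun b _ => ?_
      rw [div_eq_mul_inv]
      calc W * (ww b * W⁻¹ * g b) = ww b * (W⁻¹ * W) * g b := by ring
        _ = ww b * g b := by rw [ENNReal.inv_mul_cancel hW0 hWt, mul_one]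
    calc ∑ a : Fin N → Fin N, ∫⁻ y : Fin N → E,
          (((N : ℝ≥0∞))⁻¹ * W) *
            ((((N : ℝ≥0∞))⁻¹ * ∑ i : Fin N, v (a i) (y i)) *
              ∏ k : Fin N, (ww (a k) / W * qf (a k) (y k)))
          ∂(Measure.pi fun _ : Fin N => μ)
        = ∑ a : Fin N → Fin N,
            ((((N : ℝ≥0∞))⁻¹ * W) * (((N : ℝ≥0∞))⁻¹ * ∏ k : Fin N, (ww (a k) / W))) *
              ∑ i : Fin N, g (a i) := Finset.sum_congr rfl fun a _ => hInner a
      _ = ∑ a : Fin N → Fin N, ∑ i : Fin N,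
            (((N : ℝ≥0∞))⁻¹ * W) * (((N : ℝ≥0∞))⁻¹ *
              ((∏ k : Fin N, (ww (a k) / W)) * g (a i))) := by
          refine Finset.sum_congr rfl fun a _ => ?_
          rw [Finset.mul_sum]
          exact Finset.sum_congr rfl fun i _ => by ring
      _ = ∑ i : Fin N, ∑ a : Fin N → Fin N,
            (((N : ℝ≥0∞))⁻¹ * W) * (((N : ℝ≥0∞))⁻¹ *
              ((∏ k : Fin N, (ww (a k) / W)) * g (a i))) := Finset.sum_comm
      _ = ∑ _i : Fin N, (((N : ℝ≥0∞))⁻¹ * W) * (((N : ℝ≥0∞))⁻¹ *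
            ∑ b : Fin N, (ww b / W) * g b) := by
          refine Finset.sum_congr rfl fun i _ => ?_
          have h5 : (((N : ℝ≥0∞))⁻¹ * W) * (((N : ℝ≥0∞))⁻¹ * ∑ b : Fin N, (ww b / W) * g b)
              = ∑ a : Fin N → Fin N, (((N : ℝ≥0∞))⁻¹ * W) * (((N : ℝ≥0∞))⁻¹ *
                  ((∏ k : Fin N, (ww (a k) / W)) * g (a i))) := by
            rw [← hsum i]
            simp only [Finset.mul_sum]
          exact h5.symm
      _ = ((N : ℝ≥0∞)) * ((((N : ℝ≥0∞))⁻¹ * W) * (((N : ℝ≥0∞))⁻¹ *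
            ∑ b : Fin N, (ww b / W) * g b)) := by
          rw [Finset.sum_const, Finset.card_univ, Fintype.card_fin, nsmul_eq_mul]
      _ = (((N : ℝ≥0∞)) * ((N : ℝ≥0∞))⁻¹) * (((N : ℝ≥0∞))⁻¹ *
            (W * ∑ b : Fin N, (ww b / W) * g b)) := by ring
      _ = ((N : ℝ≥0∞))⁻¹ * (W * ∑ b : Fin N, (ww b / W) * g b) := by
          rw [ENNReal.mul_inv_cancel hNne (natCast_ne_top N), one_mul]
      _ = ((N : ℝ≥0∞))⁻¹ * ∑ b : Fin N, ww b * g b := by rw [hWsum]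
      _ = ((N : ℝ≥0∞))⁻¹ * ∑ b : Fin N, Gbar b /
            ENNReal.ofReal (gprev γ S (z b) * q S (z b)) := by
          rw [Finset.sum_congr rfl fun b _ => hmerge b]


end Crux2

end SMCTut
namespace SMCTut

set_option linter.unusedSectionVars false
set_option maxHeartbeats 2000000

open MeasureTheory ENNReal

variable {E : Type*} [MeasurableSpace E] {N : ℕ}
variable {γ q : (t : ℕ) → (Fin (t + 1) → E) → ℝ} {S : ℕ}

lemma Qe_snoc (X' : Fin (S + 1) → Fin N → E) (y : Fin N → E)
    (A' : Fin S → Fin N → Fin N) (a : Fin N → Fin N) :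
    Qe γ q (Fin.snoc X' y) (Fin.snoc A' a)
      = Qe γ q X' A' * ∏ i : Fin N,
          (ENNReal.ofReal (wt γ q S (ptraj X' A' S (a i))) /
              (∑ j : Fin N, ENNReal.ofReal (wt γ q S (ptraj X' A' S j))) *
            ENNReal.ofReal (q (S + 1) (Fin.snoc (ptraj X' A' S (a i)) (y i)))) := by
  unfold Qe
  rw [Finset.prod_Ico_succ_top (Nat.succ_le_succ (Nat.zero_le S))]
  have hp1 : ptraj (Fin.snoc X' y) (Fin.snoc A' a) 0 = ptraj X' A' 0 :=
    ptraj_snoc_of_le X' y A' a (Nat.zero_le S)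
  have hp2 : ∀ t ∈ Finset.Ico 1 (S + 1),
      (∏ i : Fin N,
        (ENNReal.ofReal (wt γ q (t - 1) (ptraj (Fin.snoc X' y) (Fin.snoc A' a) (t - 1)
            (extA (Fin.snoc A' a) (t - 1) i))) /
            (∑ j : Fin N, ENNReal.ofReal (wt γ q (t - 1)
              (ptraj (Fin.snoc X' y) (Fin.snoc A' a) (t - 1) j))) *
          ENNReal.ofReal (q t (ptraj (Fin.snoc X' y) (Fin.snoc A' a) t i))))
      = ∏ i : Fin N,
          (ENNReal.ofReal (wt γ q (t - 1) (ptraj X' A' (t - 1) (extA A' (t - 1) i))) /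
              (∑ j : Fin N, ENNReal.ofReal (wt γ q (t - 1) (ptraj X' A' (t - 1) j))) *
            ENNReal.ofReal (q t (ptraj X' A' t i))) := by
    intro t ht
    obtain ⟨ht1, ht2⟩ := Finset.mem_Ico.mp ht
    have htS : t ≤ S := Nat.lt_succ_iff.mp ht2
    have ht1S : t - 1 < S := lt_of_lt_of_le (Nat.sub_lt (Nat.lt_of_lt_of_le Nat.zero_lt_one ht1) Nat.zero_lt_one) htS
    rw [ptraj_snoc_of_le X' y A' a (le_of_lt ht1S), ptraj_snoc_of_le X' y A' a htS,
      extA_snoc_lt A' a ht1S]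
  have hp3top : ∀ i : Fin N, ptraj (Fin.snoc X' y) (Fin.snoc A' a) (S + 1) i
      = Fin.snoc (ptraj X' A' S (a i)) (y i) := ptraj_snoc_top X' y A' a
  rw [Finset.prod_congr rfl hp2, hp1]
  have hp3 : (∏ i : Fin N,
      (ENNReal.ofReal (wt γ q S (ptraj (Fin.snoc X' y) (Fin.snoc A' a) S
          (extA (Fin.snoc A' a) S i))) /
          (∑ j : Fin N, ENNReal.ofReal (wt γ q S
            (ptraj (Fin.snoc X' y) (Fin.snoc A' a) S j))) *
        ENNReal.ofReal (q (S + 1) (ptraj (Fin.snoc X' y) (Fin.snoc A' a) (S + 1) i))))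
      = ∏ i : Fin N,
          (ENNReal.ofReal (wt γ q S (ptraj X' A' S (a i))) /
              (∑ j : Fin N, ENNReal.ofReal (wt γ q S (ptraj X' A' S j))) *
            ENNReal.ofReal (q (S + 1) (Fin.snoc (ptraj X' A' S (a i)) (y i)))) := by
    refine Finset.prod_congr rfl fun i _ => ?_
    rw [ptraj_snoc_of_le X' y A' a le_rfl, extA_snoc_last A' a, hp3top i]
  rw [← mul_assoc]
  congr 1

end SMCTut
namespace SMCTut

set_option linter.unusedSectionVars false
set_option maxHeartbeats 4000000

open MeasureTheory ENNReal

variable {E : Type*} [MeasurableSpace E] {N : ℕ}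

/-- The key induction: expectation of the partially-collapsed estimator. -/
lemma key (μ : Measure E) [SigmaFinite μ] (hN : 1 ≤ N)
    (γ q : (t : ℕ) → (Fin (t + 1) → E) → ℝ) :
    ∀ (S : ℕ) (G : (Fin (S + 1) → E) → ℝ≥0∞),
      (∀ t ≤ S, Measurable (γ t)) → (∀ t x, 0 ≤ γ t x) →
      (∀ t ≤ S, Measurable (q t)) → (∀ t x, 0 ≤ q t x) →
      ((∫ x, q 0 x ∂(Measure.pi fun _ : Fin 1 => μ)) = 1) →
      (∀ t < S, ∀ x : Fin (t + 1) → E, ∫ ξ, q (t + 1) (Fin.snoc x ξ) ∂μ = 1) →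
      (∀ t ≤ S, ∀ x : Fin (t + 1) → E, 0 < γ t x → 0 < gprev γ t x * q t x) →
      Measurable G →
      (∀ x : Fin (S + 1) → E, G x ≠ 0 → 0 < gprev γ S x * q S x) →
      ∑ A : Fin S → Fin N → Fin N,
          ∫⁻ X, Fe γ q G X A
            ∂(Measure.pi fun _ : Fin (S + 1) => Measure.pi fun _ : Fin N => μ)
        = ∫⁻ x, G x ∂(Measure.pi fun _ : Fin (S + 1) => μ) := by
  have hNpos : (0 : ℕ) < N := Nat.lt_of_lt_of_le Nat.zero_lt_one hN
  have hNne : ((N : ℝ≥0∞)) ≠ 0 := Nat.cast_ne_zero.mpr (by omega)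
  intro S
  induction S with
  | zero =>
      intro G hγme hγn hqme hqn hq1 hqp hsupp hG hGsupp
      haveI : Subsingleton (Fin 0 → Fin N → Fin N) :=
        ⟨fun f g => funext fun i => i.elim0⟩
      rw [Fintype.sum_subsingleton _ (fun (i : Fin 0) => i.elim0)]
      set A₀ : Fin 0 → Fin N → Fin N := fun i => i.elim0 with hA₀
      -- the integrand only depends on the time-0 slice
      set H : (Fin N → E) → ℝ≥0∞ := fun x =>
        ((((N : ℝ≥0∞))⁻¹ * ∑ i : Fin N, G (fun _ : Fin 1 => x i) /
            ENNReal.ofReal (gprev γ 0 (fun _ : Fin 1 => x i) * q 0 (fun _ : Fin 1 => x i))) *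
          ∏ k : Fin N, ENNReal.ofReal (q 0 (fun _ : Fin 1 => x k))) with hH
      have hFe : ∀ X : Fin 1 → Fin N → E, Fe γ q G X A₀ = H (X 0) := by
        intro X
        unfold Fe Qe
        have hc : ∀ i, ptraj X A₀ 0 i = fun _ : Fin 1 => X 0 i := ptraj_zero X A₀
        simp only [Finset.range_zero, Finset.prod_empty, Finset.Ico_self, one_mul, mul_one, hc,
          hH]
      -- measurable single-particle functions
      have hconstme : Measurable fun b : E => (fun _ : Fin 1 => b) :=
        measurable_pi_lambda _ fun _ => measurable_id
      have hGme1 : Measurable fun b : E => G (fun _ : Fin 1 => b) := hG.comp hconstme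
      have hq0me1 : Measurable fun b : E => ENNReal.ofReal (q 0 (fun _ : Fin 1 => b)) :=
        ((hqme 0 le_rfl).comp hconstme).ennreal_ofReal
      have hvme1 : Measurable fun b : E => G (fun _ : Fin 1 => b) /
          ENNReal.ofReal (gprev γ 0 (fun _ : Fin 1 => b) * q 0 (fun _ : Fin 1 => b)) := by
        refine hGme1.div ?_
        exact (((measurable_gprev 0 fun s hs => absurd hs (Nat.not_lt_zero s)).mul
          (hqme 0 le_rfl)).comp hconstme).ennreal_ofReal
      -- transfer of single-coordinate integrals
      have e2 := MeasurableEquiv.funUnique (Fin 1) E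
      have hmp2 : MeasurePreserving (MeasurableEquiv.funUnique (Fin 1) E).symm μ
          (Measure.pi fun _ : Fin 1 => μ) :=
        (measurePreserving_funUnique μ (Fin 1)).symm _
      have hsymm2 : ∀ b : E, (MeasurableEquiv.funUnique (Fin 1) E).symm b
          = fun _ : Fin 1 => b := by
        intro b
        funext j
        rfl
      have hGtrans : ∫⁻ b, G (fun _ : Fin 1 => b) ∂μ
          = ∫⁻ x, G x ∂(Measure.pi fun _ : Fin 1 => μ) := by
        rw [← hmp2.lintegral_comp hG]
        refine lintegral_congr fun b => ?_
        rw [hsymm2 b]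
      have hq0int : ∫⁻ x, ENNReal.ofReal (q 0 x) ∂(Measure.pi fun _ : Fin 1 => μ) = 1 := by
        have hint : Integrable (q 0) (Measure.pi fun _ : Fin 1 => μ) := by
          by_contra h
          rw [integral_undef h] at hq1
          exact one_ne_zero hq1.symm
        rw [← ofReal_integral_eq_lintegral_ofReal hint
          (Filter.Eventually.of_forall fun x => hqn 0 x), hq1, ENNReal.ofReal_one]
      have hqtrans : ∫⁻ b, ENNReal.ofReal (q 0 (fun _ : Fin 1 => b)) ∂μ = 1 := by
        rw [← hq0int, ← hmp2.lintegral_comp (hqme 0 le_rfl).ennreal_ofReal]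
        refine lintegral_congr fun b => ?_
        rw [hsymm2 b]
      -- pointwise cancellation
      have hcancel : ∀ b : E, G (fun _ : Fin 1 => b) /
            ENNReal.ofReal (gprev γ 0 (fun _ : Fin 1 => b) * q 0 (fun _ : Fin 1 => b)) *
            ENNReal.ofReal (q 0 (fun _ : Fin 1 => b)) = G (fun _ : Fin 1 => b) := by
        intro b
        have h1 := weight_cancel_pointwise (gprev_nonneg hγn 0 (fun _ : Fin 1 => b))
          (hqn 0 (fun _ : Fin 1 => b)) (hGsupp (fun _ : Fin 1 => b))
        rw [h1]
        have : gprev γ 0 (fun _ : Fin 1 => b) = (1 : ℝ) := rfl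
        rw [this, ENNReal.ofReal_one, div_one]
      -- compute the integral of H over one particle slice
      have hHint : ∫⁻ x, H x ∂(Measure.pi fun _ : Fin N => μ)
          = ∫⁻ x, G x ∂(Measure.pi fun _ : Fin 1 => μ) := by
        have hsplit : ∀ x : Fin N → E, H x = ((N : ℝ≥0∞))⁻¹ *
            ∑ i : Fin N, ((G (fun _ : Fin 1 => x i) /
              ENNReal.ofReal (gprev γ 0 (fun _ : Fin 1 => x i) * q 0 (fun _ : Fin 1 => x i))) *
              ∏ k : Fin N, ENNReal.ofReal (q 0 (fun _ : Fin 1 => x k))) := by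
          intro x
          rw [hH]
          simp only
          rw [mul_assoc, ← Finset.sum_mul]
        rw [lintegral_congr hsplit, lintegral_const_mul _ ?hme]
        case hme =>
          refine Finset.measurable_sum _ fun i _ => ?_
          exact (hvme1.comp (measurable_pi_apply i)).mul
            (Finset.measurable_prod _ fun k _ => hq0me1.comp (measurable_pi_apply k))
        have hterm_me : ∀ i ∈ Finset.univ, Measurable fun x : Fin N → E =>
            (G (fun _ : Fin 1 => x i) /
              ENNReal.ofReal (gprev γ 0 (fun _ : Fin 1 => x i) * q 0 (fun _ : Fin 1 => x i))) *
              ∏ k : Fin N, ENNReal.ofReal (q 0 (fun _ : Fin 1 => x k)) := by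
          intro i _
          exact (hvme1.comp (measurable_pi_apply i)).mul
            (Finset.measurable_prod _ fun k _ => hq0me1.comp (measurable_pi_apply k))
        rw [lintegral_finset_sum _ hterm_me]
        have hterm : ∀ i : Fin N, ∫⁻ x : Fin N → E, (G (fun _ : Fin 1 => x i) /
              ENNReal.ofReal (gprev γ 0 (fun _ : Fin 1 => x i) * q 0 (fun _ : Fin 1 => x i))) *
              ∏ k : Fin N, ENNReal.ofReal (q 0 (fun _ : Fin 1 => x k))
              ∂(Measure.pi fun _ : Fin N => μ)
            = ∫⁻ x, G x ∂(Measure.pi fun _ : Fin 1 => μ) := by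
          intro i
          classical
          set F : Fin N → E → ℝ≥0∞ := fun k => if k = i then
              (fun b => G (fun _ : Fin 1 => b) /
                ENNReal.ofReal (gprev γ 0 (fun _ : Fin 1 => b) * q 0 (fun _ : Fin 1 => b)) *
                ENNReal.ofReal (q 0 (fun _ : Fin 1 => b)))
            else (fun b => ENNReal.ofReal (q 0 (fun _ : Fin 1 => b))) with hF
          have hFme : ∀ k, Measurable (F k) := by
            intro k
            rw [hF]
            by_cases h : k = i
            · simpa [h, Pi.mul_def] using hvme1.mul hq0me1
            · simpa [h] using hq0me1
          have hpt : ∀ x : Fin N → E, (G (fun _ : Fin 1 => x i) /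
                ENNReal.ofReal (gprev γ 0 (fun _ : Fin 1 => x i) * q 0 (fun _ : Fin 1 => x i))) *
                ∏ k : Fin N, ENNReal.ofReal (q 0 (fun _ : Fin 1 => x k))
              = ∏ k : Fin N, F k (x k) := by
            intro x
            have hFi : F i (x i) = G (fun _ : Fin 1 => x i) /
                ENNReal.ofReal (gprev γ 0 (fun _ : Fin 1 => x i) * q 0 (fun _ : Fin 1 => x i)) *
                ENNReal.ofReal (q 0 (fun _ : Fin 1 => x i)) := by simp [hF]
            have h2 : ∀ k ∈ Finset.univ.erase i,
                F k (x k) = ENNReal.ofReal (q 0 (fun _ : Fin 1 => x k)) := by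
              intro k hk
              have hne : k ≠ i := (Finset.mem_erase.mp hk).1
              simp [hF, hne]
            calc (G (fun _ : Fin 1 => x i) /
                ENNReal.ofReal (gprev γ 0 (fun _ : Fin 1 => x i) * q 0 (fun _ : Fin 1 => x i))) *
                ∏ k : Fin N, ENNReal.ofReal (q 0 (fun _ : Fin 1 => x k))
                = (G (fun _ : Fin 1 => x i) /
                  ENNReal.ofReal (gprev γ 0 (fun _ : Fin 1 => x i) * q 0 (fun _ : Fin 1 => x i))) *
                  (ENNReal.ofReal (q 0 (fun _ : Fin 1 => x i)) *
                    ∏ k ∈ Finset.univ.erase i, ENNReal.ofReal (q 0 (fun _ : Fin 1 => x k))) := by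
                  rw [Finset.mul_prod_erase Finset.univ
                    (fun k => ENNReal.ofReal (q 0 (fun _ : Fin 1 => x k))) (Finset.mem_univ i)]
              _ = F i (x i) * ∏ k ∈ Finset.univ.erase i, F k (x k) := by
                  rw [hFi, Finset.prod_congr rfl h2]
                  ring
              _ = ∏ k : Fin N, F k (x k) :=
                  Finset.mul_prod_erase Finset.univ (fun k => F k (x k)) (Finset.mem_univ i)
          rw [lintegral_congr hpt, lintegral_fin_pi_prod μ F hFme,
            ← Finset.mul_prod_erase Finset.univ (fun k => ∫⁻ b, F k b ∂μ) (Finset.mem_univ i)]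
          have h2 : ∫⁻ b, F i b ∂μ = ∫⁻ x, G x ∂(Measure.pi fun _ : Fin 1 => μ) := by
            have hFi : F i = fun b => G (fun _ : Fin 1 => b) /
                ENNReal.ofReal (gprev γ 0 (fun _ : Fin 1 => b) * q 0 (fun _ : Fin 1 => b)) *
                ENNReal.ofReal (q 0 (fun _ : Fin 1 => b)) := by simp [hF]
            rw [hFi, lintegral_congr hcancel, hGtrans]
          have h3 : ∀ k ∈ Finset.univ.erase i, (∫⁻ b, F k b ∂μ) = 1 := by
            intro k hk
            have hne : k ≠ i := (Finset.mem_erase.mp hk).1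
            have hFk : F k = fun b => ENNReal.ofReal (q 0 (fun _ : Fin 1 => b)) := by
              simp [hF, hne]
            rw [hFk, hqtrans]
          rw [h2, Finset.prod_congr rfl h3, Finset.prod_const_one, mul_one]
        rw [Finset.sum_congr rfl fun i _ => hterm i, Finset.sum_const, Finset.card_univ,
          Fintype.card_fin, nsmul_eq_mul, ← mul_assoc,
          ENNReal.inv_mul_cancel hNne (natCast_ne_top N), one_mul]
      -- put the pieces together
      have hmp1 : MeasurePreserving (MeasurableEquiv.funUnique (Fin 1) (Fin N → E))
          (Measure.pi fun _ : Fin 1 => Measure.pi fun _ : Fin N => μ)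
          (Measure.pi fun _ : Fin N => μ) :=
        measurePreserving_funUnique _ (Fin 1)
      have hHme : Measurable H := by
        rw [hH]
        refine Measurable.mul (Measurable.mul measurable_const ?_) ?_
        · exact Finset.measurable_sum _ fun i _ => hvme1.comp (measurable_pi_apply i)
        · exact Finset.measurable_prod _ fun k _ => hq0me1.comp (measurable_pi_apply k)
      calc ∫⁻ X, Fe γ q G X A₀
            ∂(Measure.pi fun _ : Fin 1 => Measure.pi fun _ : Fin N => μ)
          = ∫⁻ X : Fin 1 → Fin N → E,
              H ((MeasurableEquiv.funUnique (Fin 1) (Fin N → E)) X)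
              ∂(Measure.pi fun _ : Fin 1 => Measure.pi fun _ : Fin N => μ) := by
            refine lintegral_congr fun X => ?_
            rw [hFe X]
            rfl
        _ = ∫⁻ x, H x ∂(Measure.pi fun _ : Fin N => μ) := hmp1.lintegral_comp hHme
        _ = ∫⁻ x, G x ∂(Measure.pi fun _ : Fin 1 => μ) := hHint
  | succ S ih =>
      intro G hγme hγn hqme hqn hq1 hqp hsupp hG hGsupp
      have hγme' : ∀ t ≤ S, Measurable (γ t) := fun t ht => hγme t (ht.trans (Nat.le_succ S))
      have hqme' : ∀ t ≤ S, Measurable (q t) := fun t ht => hqme t (ht.trans (Nat.le_succ S))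
      have hqp' : ∀ t < S, ∀ x : Fin (t + 1) → E, ∫ ξ, q (t + 1) (Fin.snoc x ξ) ∂μ = 1 :=
        fun t ht => hqp t (ht.trans (Nat.lt_succ_self S))
      have hsupp' : ∀ t ≤ S, ∀ x : Fin (t + 1) → E, 0 < γ t x → 0 < gprev γ t x * q t x :=
        fun t ht => hsupp t (ht.trans (Nat.le_succ S))
      have hGp : Measurable fun p : (Fin (S + 1) → E) × E => G (Fin.snoc p.1 p.2) :=
        hG.comp (measurable_snoc_pair.comp measurable_swap)
      have hG'me : Measurable fun x : Fin (S + 1) → E => ∫⁻ ξ, G (Fin.snoc x ξ) ∂μ :=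
        hGp.lintegral_prod_right'
      have hgprevS : ∀ (x : Fin (S + 1) → E) (ξ : E),
          gprev γ (S + 1) (Fin.snoc x ξ) = γ S x := by
        intro x ξ
        simp only [gprev]
        rw [Fin.init_snoc]
      have hG'supp : ∀ x : Fin (S + 1) → E,
          (∫⁻ ξ, G (Fin.snoc x ξ) ∂μ) ≠ 0 → 0 < gprev γ S x * q S x := by
        intro x hx
        have hξ : ∃ ξ, G (Fin.snoc x ξ) ≠ 0 := by
          by_contra h
          push_neg at h
          refine hx ?_
          simp only [h]
          exact lintegral_zero
        obtain ⟨ξ, hξ⟩ := hξ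
        have h2 := hGsupp (Fin.snoc x ξ) hξ
        rw [hgprevS x ξ] at h2
        have hγpos : 0 < γ S x := by
          by_contra h0
          have hz0 : γ S x = 0 := le_antisymm (not_lt.mp h0) (hγn S x)
          rw [hz0, zero_mul] at h2
          exact lt_irrefl 0 h2
        exact hsupp S (Nat.le_succ S) x hγpos
      -- pointwise collapse of the last time step
      have hpoint : ∀ (A' : Fin S → Fin N → Fin N) (X' : Fin (S + 1) → Fin N → E),
          ∑ a : Fin N → Fin N, ∫⁻ y : Fin N → E,
              Fe γ q G (Fin.snoc X' y) (Fin.snoc A' a) ∂(Measure.pi fun _ : Fin N => μ)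
            = Fe γ q (fun x => ∫⁻ ξ, G (Fin.snoc x ξ) ∂μ) X' A' := by
        intro A' X'
        set z : Fin N → (Fin (S + 1) → E) := fun b => ptraj X' A' S b with hz
        have hFeBig : ∀ (a : Fin N → Fin N) (y : Fin N → E),
            Fe γ q G (Fin.snoc X' y) (Fin.snoc A' a)
              = ((∏ t ∈ Finset.range S, ((N : ℝ≥0∞))⁻¹ *
                    ∑ j : Fin N, ENNReal.ofReal (wt γ q t (ptraj X' A' t j))) *
                  Qe γ q X' A') *
                ((((N : ℝ≥0∞))⁻¹ * ∑ j : Fin N, ENNReal.ofReal (wt γ q S (z j))) *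
                  ((((N : ℝ≥0∞))⁻¹ * ∑ i : Fin N, G (Fin.snoc (z (a i)) (y i)) /
                      ENNReal.ofReal (gprev γ (S + 1) (Fin.snoc (z (a i)) (y i)) *
                        q (S + 1) (Fin.snoc (z (a i)) (y i)))) *
                    ∏ k : Fin N, (ENNReal.ofReal (wt γ q S (z (a k))) /
                        (∑ j : Fin N, ENNReal.ofReal (wt γ q S (z j))) *
                      ENNReal.ofReal (q (S + 1) (Fin.snoc (z (a k)) (y k)))))) := by
          intro a y
          unfold Fe
          rw [Qe_snoc X' y A' a, Finset.prod_range_succ]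
          have h1 : ∀ t ∈ Finset.range S,
              (((N : ℝ≥0∞))⁻¹ * ∑ j : Fin N, ENNReal.ofReal
                  (wt γ q t (ptraj (Fin.snoc X' y) (Fin.snoc A' a) t j)))
                = ((N : ℝ≥0∞))⁻¹ *
                    ∑ j : Fin N, ENNReal.ofReal (wt γ q t (ptraj X' A' t j)) := by
            intro t ht
            rw [ptraj_snoc_of_le X' y A' a (le_of_lt (Finset.mem_range.mp ht))]
          rw [Finset.prod_congr rfl h1, ptraj_snoc_of_le X' y A' a le_rfl]
          have h2 : ∀ i : Fin N, ptraj (Fin.snoc X' y) (Fin.snoc A' a) (S + 1) i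
              = Fin.snoc (z (a i)) (y i) := fun i => ptraj_snoc_top X' y A' a i
          simp only [h2]
          ring
        have hcme : ∀ a : Fin N → Fin N, Measurable fun y : Fin N → E =>
            (((N : ℝ≥0∞))⁻¹ * ∑ j : Fin N, ENNReal.ofReal (wt γ q S (z j))) *
              ((((N : ℝ≥0∞))⁻¹ * ∑ i : Fin N, G (Fin.snoc (z (a i)) (y i)) /
                  ENNReal.ofReal (gprev γ (S + 1) (Fin.snoc (z (a i)) (y i)) *
                    q (S + 1) (Fin.snoc (z (a i)) (y i)))) *
                ∏ k : Fin N, (ENNReal.ofReal (wt γ q S (z (a k))) /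
                    (∑ j : Fin N, ENNReal.ofReal (wt γ q S (z j))) *
                  ENNReal.ofReal (q (S + 1) (Fin.snoc (z (a k)) (y k))))) := by
          intro a
          have hsn : ∀ b : Fin N, Measurable fun y : Fin N → E =>
              (Fin.snoc (z b) (y b) : Fin (S + 2) → E) :=
            fun b => (measurable_snoc_const (z b)).comp (measurable_pi_apply b)
          refine measurable_const.mul (Measurable.mul (measurable_const.mul ?_) ?_)
          · refine Finset.measurable_sum _ fun i _ => ?_
            have hsni : Measurable fun y : Fin N → E =>
                (Fin.snoc (z (a i)) (y i) : Fin (S + 2) → E) :=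
              (measurable_snoc_const (z (a i))).comp (measurable_pi_apply i)
            refine (hG.comp hsni).div ?_
            exact (((measurable_gprev (S + 1) fun s hs => hγme s (le_of_lt hs)).mul
              (hqme (S + 1) le_rfl)).comp hsni).ennreal_ofReal
          · refine Finset.measurable_prod _ fun k _ => ?_
            refine measurable_const.mul ?_
            exact ((hqme (S + 1) le_rfl).comp
              ((measurable_snoc_const (z (a k))).comp (measurable_pi_apply k))).ennreal_ofReal
        calc ∑ a : Fin N → Fin N, ∫⁻ y : Fin N → E,
              Fe γ q G (Fin.snoc X' y) (Fin.snoc A' a) ∂(Measure.pi fun _ : Fin N => μ)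
            = ∑ a : Fin N → Fin N, ∫⁻ y : Fin N → E,
                ((∏ t ∈ Finset.range S, ((N : ℝ≥0∞))⁻¹ *
                    ∑ j : Fin N, ENNReal.ofReal (wt γ q t (ptraj X' A' t j))) *
                  Qe γ q X' A') *
                ((((N : ℝ≥0∞))⁻¹ * ∑ j : Fin N, ENNReal.ofReal (wt γ q S (z j))) *
                  ((((N : ℝ≥0∞))⁻¹ * ∑ i : Fin N, G (Fin.snoc (z (a i)) (y i)) /
                      ENNReal.ofReal (gprev γ (S + 1) (Fin.snoc (z (a i)) (y i)) *
                        q (S + 1) (Fin.snoc (z (a i)) (y i)))) *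
                    ∏ k : Fin N, (ENNReal.ofReal (wt γ q S (z (a k))) /
                        (∑ j : Fin N, ENNReal.ofReal (wt γ q S (z j))) *
                      ENNReal.ofReal (q (S + 1) (Fin.snoc (z (a k)) (y k))))))
                ∂(Measure.pi fun _ : Fin N => μ) :=
              Finset.sum_congr rfl fun a _ => lintegral_congr (hFeBig a)
          _ = ∑ a : Fin N → Fin N,
                ((∏ t ∈ Finset.range S, ((N : ℝ≥0∞))⁻¹ *
                    ∑ j : Fin N, ENNReal.ofReal (wt γ q t (ptraj X' A' t j))) *
                  Qe γ q X' A') *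
                ∫⁻ y : Fin N → E,
                  ((((N : ℝ≥0∞))⁻¹ * ∑ j : Fin N, ENNReal.ofReal (wt γ q S (z j))) *
                    ((((N : ℝ≥0∞))⁻¹ * ∑ i : Fin N, G (Fin.snoc (z (a i)) (y i)) /
                        ENNReal.ofReal (gprev γ (S + 1) (Fin.snoc (z (a i)) (y i)) *
                          q (S + 1) (Fin.snoc (z (a i)) (y i)))) *
                      ∏ k : Fin N, (ENNReal.ofReal (wt γ q S (z (a k))) /
                          (∑ j : Fin N, ENNReal.ofReal (wt γ q S (z j))) *
                        ENNReal.ofReal (q (S + 1) (Fin.snoc (z (a k)) (y k))))))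
                  ∂(Measure.pi fun _ : Fin N => μ) :=
              Finset.sum_congr rfl fun a _ => lintegral_const_mul _ (hcme a)
          _ = ((∏ t ∈ Finset.range S, ((N : ℝ≥0∞))⁻¹ *
                    ∑ j : Fin N, ENNReal.ofReal (wt γ q t (ptraj X' A' t j))) *
                  Qe γ q X' A') *
                ∑ a : Fin N → Fin N, ∫⁻ y : Fin N → E,
                  ((((N : ℝ≥0∞))⁻¹ * ∑ j : Fin N, ENNReal.ofReal (wt γ q S (z j))) *
                    ((((N : ℝ≥0∞))⁻¹ * ∑ i : Fin N, G (Fin.snoc (z (a i)) (y i)) /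
                        ENNReal.ofReal (gprev γ (S + 1) (Fin.snoc (z (a i)) (y i)) *
                          q (S + 1) (Fin.snoc (z (a i)) (y i)))) *
                      ∏ k : Fin N, (ENNReal.ofReal (wt γ q S (z (a k))) /
                          (∑ j : Fin N, ENNReal.ofReal (wt γ q S (z j))) *
                        ENNReal.ofReal (q (S + 1) (Fin.snoc (z (a k)) (y k))))))
                  ∂(Measure.pi fun _ : Fin N => μ) := (Finset.mul_sum _ _ _).symm
          _ = ((∏ t ∈ Finset.range S, ((N : ℝ≥0∞))⁻¹ *
                    ∑ j : Fin N, ENNReal.ofReal (wt γ q t (ptraj X' A' t j))) *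
                  Qe γ q X' A') *
                (((N : ℝ≥0∞))⁻¹ * ∑ b : Fin N, (∫⁻ ξ, G (Fin.snoc (z b) ξ) ∂μ) /
                  ENNReal.ofReal (gprev γ S (z b) * q S (z b))) := by
              rw [crux μ hN hγn hqn (hqme (S + 1) le_rfl) (hqp S (Nat.lt_succ_self S))
                (hsupp S (Nat.le_succ S)) G hG hGsupp z]
          _ = Fe γ q (fun x => ∫⁻ ξ, G (Fin.snoc x ξ) ∂μ) X' A' := by
              unfold Fe
              simp only
              ring
      -- decompose the ancestor sum and the particle integral
      calc ∑ A : Fin (S + 1) → Fin N → Fin N,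
            ∫⁻ X, Fe γ q G X A
              ∂(Measure.pi fun _ : Fin (S + 1 + 1) => Measure.pi fun _ : Fin N => μ)
          = ∑ p : (Fin N → Fin N) × (Fin S → Fin N → Fin N),
              ∫⁻ X, Fe γ q G X (Fin.snocEquiv (fun _ => Fin N → Fin N) p)
                ∂(Measure.pi fun _ : Fin (S + 1 + 1) => Measure.pi fun _ : Fin N => μ) :=
            (Equiv.sum_comp (Fin.snocEquiv fun _ => Fin N → Fin N) _).symm
        _ = ∑ a : Fin N → Fin N, ∑ A' : Fin S → Fin N → Fin N,
              ∫⁻ X, Fe γ q G X (Fin.snoc A' a)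
                ∂(Measure.pi fun _ : Fin (S + 1 + 1) => Measure.pi fun _ : Fin N => μ) := by
            rw [Fintype.sum_prod_type]
            rfl
        _ = ∑ a : Fin N → Fin N, ∑ A' : Fin S → Fin N → Fin N,
              ∫⁻ X' : Fin (S + 1) → Fin N → E, ∫⁻ y : Fin N → E,
                Fe γ q G (Fin.snoc X' y) (Fin.snoc A' a) ∂(Measure.pi fun _ : Fin N => μ)
                ∂(Measure.pi fun _ : Fin (S + 1) => Measure.pi fun _ : Fin N => μ) := by
            refine Finset.sum_congr rfl fun a _ => Finset.sum_congr rfl fun A' _ => ?_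
            exact lintegral_pi_snoc (Measure.pi fun _ : Fin N => μ) _
              (measurable_Fe (Fin.snoc A' a) hγme hqme hG)
        _ = ∑ A' : Fin S → Fin N → Fin N, ∑ a : Fin N → Fin N,
              ∫⁻ X' : Fin (S + 1) → Fin N → E, ∫⁻ y : Fin N → E,
                Fe γ q G (Fin.snoc X' y) (Fin.snoc A' a) ∂(Measure.pi fun _ : Fin N => μ)
                ∂(Measure.pi fun _ : Fin (S + 1) => Measure.pi fun _ : Fin N => μ) :=
            Finset.sum_comm
        _ = ∑ A' : Fin S → Fin N → Fin N,
              ∫⁻ X' : Fin (S + 1) → Fin N → E, ∑ a : Fin N → Fin N, ∫⁻ y : Fin N → E,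
                Fe γ q G (Fin.snoc X' y) (Fin.snoc A' a) ∂(Measure.pi fun _ : Fin N => μ)
                ∂(Measure.pi fun _ : Fin (S + 1) => Measure.pi fun _ : Fin N => μ) := by
            refine Finset.sum_congr rfl fun A' _ => ?_
            rw [← lintegral_finset_sum]
            intro a _
            exact (((measurable_Fe (Fin.snoc A' a) hγme hqme hG).comp
              (measurable_snoc_pair.comp measurable_swap))).lintegral_prod_right'
        _ = ∑ A' : Fin S → Fin N → Fin N,
              ∫⁻ X' : Fin (S + 1) → Fin N → E,
                Fe γ q (fun x => ∫⁻ ξ, G (Fin.snoc x ξ) ∂μ) X' A'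
                ∂(Measure.pi fun _ : Fin (S + 1) => Measure.pi fun _ : Fin N => μ) :=
            Finset.sum_congr rfl fun A' _ => lintegral_congr fun X' => hpoint A' X'
        _ = ∫⁻ x, (∫⁻ ξ, G (Fin.snoc x ξ) ∂μ) ∂(Measure.pi fun _ : Fin (S + 1) => μ) :=
            ih (fun x => ∫⁻ ξ, G (Fin.snoc x ξ) ∂μ) hγme' hγn hqme' hqn hq1 hqp' hsupp'
              hG'me hG'supp
        _ = ∫⁻ x, G x ∂(Measure.pi fun _ : Fin (S + 1 + 1) => μ) :=
            (lintegral_pi_snoc μ G hG).symm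

end SMCTut

namespace SMCTut

/-- **Unbiasedness of the SMC normalizing constant estimator** (Proposition 3 /
Theorem 2.1 with `f ≡ 1`): the estimator `Ẑ_T = ∏_{t=1}^T (1/N) ∑_i w̃_t^i` is
non-negative, and its expectation under the SMC distribution `q^{SMC}` equals the
normalizing constant `Z_T = ∫ γ̃_T dμ^{⊗T}`.  Here `T = S + 1` and time is 0-indexed. -/
theorem smc_normalizing_constant_estimator_nonneg_unbiased
    {E : Type*} [MeasurableSpace E] (μ : Measure E) [SigmaFinite μ]
    (S N : ℕ) (hN : 1 ≤ N)
    (γ q : (t : ℕ) → (Fin (t + 1) → E) → ℝ)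
    (hγmeas : ∀ t ≤ S, Measurable (γ t))
    (hγnonneg : ∀ t, ∀ x : Fin (t + 1) → E, 0 ≤ γ t x)
    (hγint : ∀ t ≤ S, Integrable (γ t) (Measure.pi fun _ : Fin (t + 1) => μ))
    (hZpos : ∀ t ≤ S, 0 < ∫ x, γ t x ∂(Measure.pi fun _ : Fin (t + 1) => μ))
    (hqmeas : ∀ t ≤ S, Measurable (q t))
    (hqnonneg : ∀ t, ∀ x : Fin (t + 1) → E, 0 ≤ q t x)
    (hq1prob : ∫ x, q 0 x ∂(Measure.pi fun _ : Fin 1 => μ) = 1)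
    (hqprob : ∀ t < S, ∀ x : Fin (t + 1) → E, ∫ ξ, q (t + 1) (Fin.snoc x ξ) ∂μ = 1)
    (hsupp : ∀ t ≤ S, ∀ x : Fin (t + 1) → E, 0 < γ t x → 0 < gprev γ t x * q t x)
    (hwsumpos :
      ∀ᵐ X ∂(Measure.pi fun _ : Fin (S + 1) => Measure.pi fun _ : Fin N => μ),
        ∀ A : Fin S → Fin N → Fin N, qSMC γ q X A ≠ 0 →
          ∀ t ≤ S, 0 < ∑ j : Fin N, wt γ q t (ptraj X A t j)) :
    (∀ (X : Fin (S + 1) → Fin N → E) (A : Fin S → Fin N → Fin N), 0 ≤ Zhat γ q X A) ∧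
      ∑ A : Fin S → Fin N → Fin N,
          ∫ X, Zhat γ q X A * qSMC γ q X A
            ∂(Measure.pi fun _ : Fin (S + 1) => Measure.pi fun _ : Fin N => μ)
        = ∫ x, γ S x ∂(Measure.pi fun _ : Fin (S + 1) => μ) := by
  constructor
  · intro X A
    exact Finset.prod_nonneg fun t _ => mul_nonneg (inv_nonneg.mpr (Nat.cast_nonneg N))
      (Finset.sum_nonneg fun i _ => wt_nonneg hγnonneg hqnonneg _ _)
  · have hGsupp : ∀ x : Fin (S + 1) → E,
        ENNReal.ofReal (γ S x) ≠ 0 → 0 < gprev γ S x * q S x := by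
      intro x h
      refine hsupp S le_rfl x ?_
      rcases lt_or_ge 0 (γ S x) with h1 | h1
      · exact h1
      · exact absurd (ENNReal.ofReal_eq_zero.mpr h1) h
    have hkey := key (N := N) μ hN γ q S (fun x => ENNReal.ofReal (γ S x)) hγmeas hγnonneg
      hqmeas hqnonneg hq1prob hqprob hsupp (hγmeas S le_rfl).ennreal_ofReal hGsupp
    have hconv : ∀ A : Fin S → Fin N → Fin N,
        ∫ X, Zhat γ q X A * qSMC γ q X A
            ∂(Measure.pi fun _ : Fin (S + 1) => Measure.pi fun _ : Fin N => μ)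
          = (∫⁻ X, Fe γ q (fun x => ENNReal.ofReal (γ S x)) X A
              ∂(Measure.pi fun _ : Fin (S + 1) => Measure.pi fun _ : Fin N => μ)).toReal := by
      intro A
      have hnn : ∀ X : Fin (S + 1) → Fin N → E, 0 ≤ Zhat γ q X A * qSMC γ q X A := by
        intro X
        refine mul_nonneg ?_ ?_
        · exact Finset.prod_nonneg fun t _ => mul_nonneg (inv_nonneg.mpr (Nat.cast_nonneg N))
            (Finset.sum_nonneg fun i _ => wt_nonneg hγnonneg hqnonneg _ _)
        · exact mul_nonneg (Finset.prod_nonneg fun i _ => hqnonneg 0 _)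
            (Finset.prod_nonneg fun t _ => Finset.prod_nonneg fun i _ => mul_nonneg
              (div_nonneg (wt_nonneg hγnonneg hqnonneg _ _)
                (Finset.sum_nonneg fun j _ => wt_nonneg hγnonneg hqnonneg _ _)) (hqnonneg _ _))
      rw [integral_eq_lintegral_of_nonneg_ae (Filter.Eventually.of_forall hnn)
        (measurable_Zhat_mul_qSMC A hγmeas hqmeas).aestronglyMeasurable]
      congr 1
      exact lintegral_congr fun X => ofReal_Zhat_mul_qSMC hγnonneg hqnonneg hN (hsupp S le_rfl) X A
    have hR : ENNReal.ofReal (∫ x, γ S x ∂(Measure.pi fun _ : Fin (S + 1) => μ))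
        = ∫⁻ x, ENNReal.ofReal (γ S x) ∂(Measure.pi fun _ : Fin (S + 1) => μ) :=
      ofReal_integral_eq_lintegral_ofReal (hγint S le_rfl)
        (Filter.Eventually.of_forall fun x => hγnonneg S x)
    have hfin : (∫⁻ x, ENNReal.ofReal (γ S x) ∂(Measure.pi fun _ : Fin (S + 1) => μ)) ≠ ⊤ := by
      rw [← hR]
      exact ENNReal.ofReal_ne_top
    have hAfin : ∀ A ∈ (Finset.univ : Finset (Fin S → Fin N → Fin N)),
        (∫⁻ X, Fe γ q (fun x => ENNReal.ofReal (γ S x)) X A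
          ∂(Measure.pi fun _ : Fin (S + 1) => Measure.pi fun _ : Fin N => μ)) ≠ ⊤ := by
      intro A _
      refine ne_top_of_le_ne_top ?_ (Finset.single_le_sum (f := fun A =>
        ∫⁻ X, Fe γ q (fun x => ENNReal.ofReal (γ S x)) X A
          ∂(Measure.pi fun _ : Fin (S + 1) => Measure.pi fun _ : Fin N => μ))
        (fun _ _ => zero_le) (Finset.mem_univ A))
      rw [hkey]
      exact hfin
    calc ∑ A : Fin S → Fin N → Fin N,
          ∫ X, Zhat γ q X A * qSMC γ q X A
            ∂(Measure.pi fun _ : Fin (S + 1) => Measure.pi fun _ : Fin N => μ)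
        = ∑ A : Fin S → Fin N → Fin N,
            (∫⁻ X, Fe γ q (fun x => ENNReal.ofReal (γ S x)) X A
              ∂(Measure.pi fun _ : Fin (S + 1) => Measure.pi fun _ : Fin N => μ)).toReal :=
          Finset.sum_congr rfl fun A _ => hconv A
      _ = (∑ A : Fin S → Fin N → Fin N,
            ∫⁻ X, Fe γ q (fun x => ENNReal.ofReal (γ S x)) X A
              ∂(Measure.pi fun _ : Fin (S + 1) => Measure.pi fun _ : Fin N => μ)).toReal :=
          (ENNReal.toReal_sum hAfin).symm
      _ = (∫⁻ x, ENNReal.ofReal (γ S x) ∂(Measure.pi fun _ : Fin (S + 1) => μ)).toReal := by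
          rw [hkey]
      _ = ∫ x, γ S x ∂(Measure.pi fun _ : Fin (S + 1) => μ) := by
          rw [← hR, ENNReal.toReal_ofReal (le_of_lt (hZpos S le_rfl))]


end SMCTut
end

section
/- Fix x_{1:t−1} ∈ E^{t−1} with γ̃_{t−1}(x_{1:t−1}) > 0, and let r(· | x_{1:t−1}) be a probability density on E with respect to μ with r(ξ | x_{1:t−1}) > 0 whenever γ̃_t((x_{1:t−1}, ξ)) > 0. The nested importance sampling algorithm draws x̃^1,…,x̃^M i.i.d. with density r(· | x_{1:t−1}), computes ω^j = γ̃_t((x_{1:t−1}, x̃^j)) / (γ̃_{t−1}(x_{1:t−1}) r(x̃^j | x_{1:t−1})), and, conditionally on the x̃'s with ∑_j ω^j > 0, draws an index J with P(J = j) = ω^j / ∑_l ω^l; it outputs X = x̃^J and Ŵ = (1/M) ∑_{j=1}^M ω^j (with X defined arbitrarily and Ŵ = 0 on the event ∑_j ω^j = 0). Then for every bounded measurable f : E → ℝ, E[Ŵ f(X)] = ∫_E f(ξ) γ̃_t((x_{1:t−1}, ξ)) / γ̃_{t−1}(x_{1:t−1}) dμ(ξ); that is, (X, Ŵ) is properly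 weighted (with constant C = 1) for the unnormalized locally optimal proposal ξ ↦ γ̃_t((x_{1:t−1}, ξ)) / γ̃_{t−1}(x_{1:t−1}). -/
open MeasureTheory

/-- **Nested importance sampling is properly weighted for the locally optimal
proposal** : fix a prefix `x_{1:t-1}` (here `xpre : Fin m → E`) with
`γ̃_{t-1}(x_{1:t-1}) > 0`.  The nested IS algorithm draws `x̃¹,…,x̃^M` i.i.d. from `r`,
computes `ωʲ = γ̃_t((x_{1:t-1}, x̃ʲ)) / (γ̃_{t-1}(x_{1:t-1}) r(x̃ʲ))`, draws
`J` with `P(J = j) = ωʲ/∑_l ω^l`, and outputs `X = x̃^J`, `Ŵ = (1/M) ∑_j ωʲ` (with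
`Ŵ = 0` and `X` arbitrary on `{∑_j ωʲ = 0}`, a convention matched below since all the
Lean divisions by `0` give `0`).  Then for every bounded measurable `f`,
`E[Ŵ f(X)] = ∫ f(ξ) γ̃_t((x_{1:t-1}, ξ)) / γ̃_{t-1}(x_{1:t-1}) dμ(ξ)`; here the
expectation over the algorithm's randomness is written out as an integral against the
joint density `∏_j r(x̃ʲ)` together with the conditional distribution of `J`. -/
theorem nested_importance_sampling_properly_weighted
    {E : Type*} [MeasurableSpace E] (μ : Measure E) [SigmaFinite μ]
    (m : ℕ)
    (γc : (Fin (m + 1) → E) → ℝ) (hγcmeas : Measurable γc) (hγcnonneg : ∀ x, 0 ≤ γc x)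
    (γp : (Fin m → E) → ℝ)
    (xpre : Fin m → E) (hpre : 0 < γp xpre)
    (hmargfin : Integrable (fun ξ => γc (Fin.snoc xpre ξ)) μ)
    (r : E → ℝ) (hrmeas : Measurable r) (hrnonneg : ∀ ξ, 0 ≤ r ξ)
    (hrprob : ∫ ξ, r ξ ∂μ = 1)
    (hsupp : ∀ ξ, 0 < γc (Fin.snoc xpre ξ) → 0 < r ξ)
    (M : ℕ) (hM : 1 ≤ M)
    (f : E → ℝ) (hfmeas : Measurable f) (hfbdd : ∃ B, ∀ x, |f x| ≤ B) :
    ∫ xs : Fin M → E,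
        (∏ j : Fin M, r (xs j)) *
          (((M : ℝ)⁻¹ * ∑ j : Fin M, γc (Fin.snoc xpre (xs j)) / (γp xpre * r (xs j))) *
            ∑ j : Fin M,
              (γc (Fin.snoc xpre (xs j)) / (γp xpre * r (xs j)) /
                  ∑ l : Fin M, γc (Fin.snoc xpre (xs l)) / (γp xpre * r (xs l))) *
                f (xs j))
        ∂(Measure.pi fun _ : Fin M => μ)
      = ∫ ξ, f ξ * (γc (Fin.snoc xpre ξ) / γp xpre) ∂μ := by
  classical
  letI : MeasureSpace E := ⟨μ⟩
  haveI : SigmaFinite (volume : Measure E) := ‹SigmaFinite μ›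
  have hγp : γp xpre ≠ 0 := ne_of_gt hpre
  set ω : E → ℝ := fun ξ => γc (Fin.snoc xpre ξ) / (γp xpre * r ξ) with hωdef
  set φ : E → ℝ := fun ξ => f ξ * (γc (Fin.snoc xpre ξ) / γp xpre) with hφdef
  set Φ : Fin M → Fin M → E → ℝ := fun j l => if l = j then φ else r with hΦdef
  have hωnonneg : ∀ ξ, 0 ≤ ω ξ := fun ξ =>
    div_nonneg (hγcnonneg _) (mul_nonneg hpre.le (hrnonneg ξ))
  have hrω : ∀ ξ, r ξ * ω ξ = γc (Fin.snoc xpre ξ) / γp xpre := by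
    intro ξ
    by_cases hr : r ξ = 0
    · have hγ : γc (Fin.snoc xpre ξ) = 0 := by
        by_contra h
        have h0 : 0 < γc (Fin.snoc xpre ξ) := lt_of_le_of_ne (hγcnonneg _) (Ne.symm h)
        exact absurd (hsupp ξ h0) (by simp [hr])
      simp [hωdef, hr, hγ]
    · simp only [hωdef]
      field_simp
  have hpoint : ∀ xs : Fin M → E,
      (∏ j : Fin M, r (xs j)) *
          (((M : ℝ)⁻¹ * ∑ j : Fin M, γc (Fin.snoc xpre (xs j)) / (γp xpre * r (xs j))) *
            ∑ j : Fin M,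
              (γc (Fin.snoc xpre (xs j)) / (γp xpre * r (xs j)) /
                  ∑ l : Fin M, γc (Fin.snoc xpre (xs l)) / (γp xpre * r (xs l))) *
                f (xs j))
      = (M : ℝ)⁻¹ * ∑ j : Fin M, ∏ l : Fin M, Φ j l (xs l) := by
    intro xs
    show (∏ j : Fin M, r (xs j)) *
          (((M : ℝ)⁻¹ * ∑ j : Fin M, ω (xs j)) *
            ∑ j : Fin M, (ω (xs j) / ∑ l : Fin M, ω (xs l)) * f (xs j))
        = (M : ℝ)⁻¹ * ∑ j : Fin M, ∏ l : Fin M, Φ j l (xs l)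
    have hterm : ∀ j : Fin M,
        (∏ l : Fin M, r (xs l)) * (ω (xs j) * f (xs j)) = ∏ l : Fin M, Φ j l (xs l) := by
      intro j
      rw [← Finset.mul_prod_erase Finset.univ (fun l => r (xs l)) (Finset.mem_univ j),
          ← Finset.mul_prod_erase Finset.univ (fun l => Φ j l (xs l)) (Finset.mem_univ j)]
      have h1 : ∀ l ∈ Finset.univ.erase j, Φ j l (xs l) = r (xs l) := by
        intro l hl
        simp [hΦdef, Finset.ne_of_mem_erase hl]
      rw [Finset.prod_congr rfl h1]
      have h2 : Φ j j (xs j) = f (xs j) * (γc (Fin.snoc xpre (xs j)) / γp xpre) := by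
        simp [hΦdef, hφdef]
      rw [h2, ← hrω (xs j)]
      ring
    by_cases hS : (∑ l : Fin M, ω (xs l)) = 0
    · have hz : ∀ j : Fin M, ω (xs j) = 0 := fun j =>
        (Finset.sum_eq_zero_iff_of_nonneg (fun l _ => hωnonneg (xs l))).1 hS j (Finset.mem_univ j)
      have hprodz : ∀ j : Fin M, (∏ l : Fin M, Φ j l (xs l)) = 0 := by
        intro j
        rw [← hterm j, hz j]
        ring
      simp [hS, hprodz, hz]
    · have hsum : (∑ j : Fin M, (ω (xs j) / ∑ l : Fin M, ω (xs l)) * f (xs j))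
          = (∑ l : Fin M, ω (xs l))⁻¹ * ∑ j : Fin M, ω (xs j) * f (xs j) := by
        rw [Finset.mul_sum]
        exact Finset.sum_congr rfl fun j _ => by ring
      rw [hsum]
      rw [show (∏ j : Fin M, r (xs j)) *
            (((M : ℝ)⁻¹ * ∑ l : Fin M, ω (xs l)) *
              ((∑ l : Fin M, ω (xs l))⁻¹ * ∑ j : Fin M, ω (xs j) * f (xs j)))
          = ((∑ l : Fin M, ω (xs l)) * (∑ l : Fin M, ω (xs l))⁻¹) *
              ((M : ℝ)⁻¹ * ((∏ l : Fin M, r (xs l)) * ∑ j : Fin M, ω (xs j) * f (xs j)))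
          from by ring]
      rw [mul_inv_cancel₀ hS, one_mul]
      refine congrArg (fun z => (M : ℝ)⁻¹ * z) ?_
      rw [Finset.mul_sum]
      exact Finset.sum_congr rfl fun j _ => hterm j
  have hrint : Integrable r μ := by
    by_contra h
    rw [integral_undef h] at hrprob
    exact one_ne_zero hrprob.symm
  have hφint : Integrable φ μ := by
    obtain ⟨B, hB⟩ := hfbdd
    exact (hmargfin.div_const _).bdd_mul hfmeas.aestronglyMeasurable
      (c := B) (Filter.Eventually.of_forall fun x => by simpa [Real.norm_eq_abs] using hB x)
  have hΦint : ∀ j l : Fin M, Integrable (Φ j l) μ := by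
    intro j l
    simp only [hΦdef]
    split_ifs
    · exact hφint
    · exact hrint
  have hpi : (Measure.pi fun _ : Fin M => μ) = (volume : Measure (Fin M → E)) := rfl
  simp only [hpoint]
  rw [hpi, integral_const_mul,
      integral_finset_sum (μ := volume) Finset.univ (fun j _ => Integrable.fintype_prod (fun l => hΦint j l))]
  have hone : ∀ j : Fin M, (∫ xs : Fin M → E, ∏ l : Fin M, Φ j l (xs l)) = ∫ x, φ x := by
    intro j
    rw [integral_fintype_prod_volume_eq_prod (ι := Fin M) (fun l => Φ j l)]
    have h1 : ∀ l : Fin M, (∫ x, Φ j l x) = if l = j then ∫ x, φ x else 1 := by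
      intro l
      by_cases h : l = j <;> simp [hΦdef, h, show (∫ x, r x) = 1 from hrprob]
    rw [Finset.prod_congr rfl fun l _ => h1 l, Finset.prod_ite_eq' Finset.univ j fun _ => ∫ x, φ x]
    simp
  rw [Finset.sum_congr rfl fun j _ => hone j, Finset.sum_const, Finset.card_univ,
      Fintype.card_fin, nsmul_eq_mul, ← mul_assoc,
      inv_mul_cancel₀ (by exact_mod_cast Nat.one_le_iff_ne_zero.1 hM : (M : ℝ) ≠ 0), one_mul]
  rfl
end

section
/- Let λ > 0, let κ be a Poisson random variable with mean λ, and let (Φ̂_j)_{j≥1} be i.i.d. real random variables, independent of κ, with E[|Φ̂_1|] < ∞ and E[Φ̂_1] = Φ. Then the Poisson estimator e^λ ∏_{j=1}^κ (Φ̂_j/λ), where the empty product equals 1, is integrable and unbiased for e^Φ: E[ e^λ ∏_{j=1}^κ Φ̂_j/λ ] = e^Φ. -/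
open MeasureTheory ProbabilityTheory
open scoped ENNReal

lemma poisson_prod_aux {Ω : Type*} [MeasurableSpace Ω] (P : Measure Ω) [IsProbabilityMeasure P]
    (f : ℕ → Ω → ℝ) (hmeas : ∀ j, Measurable (f j))
    (hiid : iIndepFun f P)
    (hint : ∀ j, Integrable (f j) P) (c : ℝ) (hc : ∀ j, ∫ ω, f j ω ∂P = c) :
    ∀ n, Integrable (fun ω => ∏ j ∈ Finset.range n, f j ω) P ∧
      ∫ ω, ∏ j ∈ Finset.range n, f j ω ∂P = c ^ n := by
  intro n
  induction n with
  | zero => simp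
  | succ n ih =>
    have hfn : (∏ j ∈ Finset.range n, f j) = fun ω => ∏ j ∈ Finset.range n, f j ω := by
      funext ω; simp
    have hind : IndepFun (∏ j ∈ Finset.range n, f j) (f n) P :=
      hiid.indepFun_prod_range_succ hmeas n
    have h1 : Integrable ((∏ j ∈ Finset.range n, f j) * f n) P := by
      refine hind.integrable_mul ?_ (hint n)
      rw [hfn]; exact ih.1
    have h2 : ((∏ j ∈ Finset.range n, f j) * f n)
        = fun ω => ∏ j ∈ Finset.range (n + 1), f j ω := by
      funext ω; simp [Finset.prod_range_succ]
    refine ⟨by rw [← h2]; exact h1, ?_⟩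
    have h3 := hind.integral_mul_eq_mul_integral (by rw [hfn]; exact ih.1.aestronglyMeasurable) (hint n).aestronglyMeasurable
    rw [h2, hfn] at h3
    rw [h3, ih.2, hc n, pow_succ]

/-- **Unbiasedness of the Poisson estimator** (Wagner): let `κ` be Poisson with mean
`λ > 0`, and let `(Φ̂ⱼ)` be i.i.d. integrable real random variables with mean `Φ`,
independent of `κ`.  Then the Poisson estimator `e^λ ∏_{j<κ} (Φ̂ⱼ/λ)` (empty product
`= 1`) is integrable and unbiased for `e^Φ`. -/
theorem poisson_estimator_unbiased
    {Ω : Type*} [MeasurableSpace Ω] (P : Measure Ω) [IsProbabilityMeasure P]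
    (lam : ℝ) (hlam : 0 < lam)
    (κ : Ω → ℕ) (hκmeas : Measurable κ)
    (hκlaw : ∀ k : ℕ, P {ω | κ ω = k}
        = ENNReal.ofReal (lam ^ k * Real.exp (-lam) / (Nat.factorial k)))
    (Φhat : ℕ → Ω → ℝ) (hΦmeas : ∀ j, Measurable (Φhat j))
    (hiid : iIndepFun Φhat P)
    (hident : ∀ j, Measure.map (Φhat j) P = Measure.map (Φhat 0) P)
    (hint : Integrable (Φhat 0) P)
    (Φ : ℝ) (hmean : ∫ ω, Φhat 0 ω ∂P = Φ)
    (hindep : IndepFun κ (fun ω => fun j => Φhat j ω) P) :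
    Integrable (fun ω => Real.exp lam * ∏ j ∈ Finset.range (κ ω), Φhat j ω / lam) P ∧
      ∫ ω, Real.exp lam * ∏ j ∈ Finset.range (κ ω), Φhat j ω / lam ∂P = Real.exp Φ := by
  -- basic facts about the Φhat j
  have hid : ∀ j, IdentDistrib (Φhat j) (Φhat 0) P P := fun j =>
    ⟨(hΦmeas j).aemeasurable, (hΦmeas 0).aemeasurable, hident j⟩
  have hintj : ∀ j, Integrable (Φhat j) P := fun j => (hid j).integrable_iff.mpr hint
  have hmeanj : ∀ j, ∫ ω, Φhat j ω ∂P = Φ := fun j => by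
    rw [(hid j).integral_eq, hmean]
  set M : ℝ := ∫ ω, |Φhat 0 ω| ∂P with hM
  have hMnonneg : 0 ≤ M := integral_nonneg fun ω => abs_nonneg _
  have habsj : ∀ j, ∫ ω, |Φhat j ω| ∂P = M := fun j =>
    ((hid j).comp measurable_abs).integral_eq
  -- the law of κ in real form
  have hsk : ∀ k : ℕ, MeasurableSet {ω | κ ω = k} := fun k =>
    hκmeas (measurableSet_singleton k)
  have hpk : ∀ k : ℕ, (P {ω | κ ω = k}).toReal
      = lam ^ k * Real.exp (-lam) / (Nat.factorial k) := fun k => by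
    rw [hκlaw k, ENNReal.toReal_ofReal (by positivity)]
  -- the indicator of {κ = k}
  set ind : ℕ → Ω → ℝ := fun k ω => Set.indicator {ω | κ ω = k} (fun _ => (1:ℝ)) ω with hind_def
  have hindmeas : ∀ k, Measurable (ind k) := fun k =>
    measurable_const.indicator (hsk k)
  have hindint : ∀ k, Integrable (ind k) P := fun k =>
    (integrable_const (1:ℝ)).indicator (hsk k)
  have hindint' : ∀ k, ∫ ω, ind k ω ∂P = (P {ω | κ ω = k}).toReal := fun k => by
    rw [hind_def]
    simp [integral_indicator_const (1:ℝ) (hsk k)]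
    rfl
  have hind01 : ∀ k ω, ind k ω = if κ ω = k then (1:ℝ) else 0 := fun k ω => by
    simp [hind_def, Set.indicator_apply]
  have hindnn : ∀ k ω, 0 ≤ ind k ω := fun k ω => by
    rw [hind01]; split <;> norm_num
  -- independence of ind k and products of functions of the Φhat j
  have hIndep : ∀ (k : ℕ) (v : ℝ → ℝ), Measurable v →
      IndepFun (ind k) (fun ω => ∏ j ∈ Finset.range k, v (Φhat j ω)) P := by
    intro k v hv
    have hφ : Measurable (fun m : ℕ => Set.indicator {m : ℕ | m = k} (fun _ => (1:ℝ)) m) :=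
      measurable_const.indicator (measurableSet_singleton k)
    have hψ : Measurable (fun w : ℕ → ℝ => ∏ j ∈ Finset.range k, v (w j)) :=
      Finset.measurable_prod _ fun j _ => hv.comp (measurable_pi_apply j)
    have heq1 : ind k = (fun m : ℕ => Set.indicator {m : ℕ | m = k} (fun _ => (1:ℝ)) m) ∘ κ := by
      funext ω; simp [hind_def, Set.indicator_apply]
    have heq2 : (fun ω => ∏ j ∈ Finset.range k, v (Φhat j ω))
        = (fun w : ℕ → ℝ => ∏ j ∈ Finset.range k, v (w j)) ∘ (fun ω => fun j => Φhat j ω) := rfl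
    rw [heq1, heq2]
    exact hindep.comp hφ hψ
  -- generic computation of ∫ ind k * ∏ v ∘ Φhat j
  have key : ∀ (k : ℕ) (v : ℝ → ℝ), Measurable v →
      (∀ j, Integrable (fun ω => v (Φhat j ω)) P) → ∀ c : ℝ,
      (∀ j, ∫ ω, v (Φhat j ω) ∂P = c) →
      Integrable (fun ω => ind k ω * ∏ j ∈ Finset.range k, v (Φhat j ω)) P ∧
      ∫ ω, ind k ω * ∏ j ∈ Finset.range k, v (Φhat j ω) ∂P
        = (P {ω | κ ω = k}).toReal * c ^ k := by
    intro k v hv hvint c hvc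
    have hiid' : iIndepFun (fun j ω => v (Φhat j ω)) P :=
      hiid.comp (fun _ => v) (fun _ => hv)
    have hprod := poisson_prod_aux P (fun j ω => v (Φhat j ω))
      (fun j => hv.comp (hΦmeas j)) hiid' hvint c hvc k
    have hindep' := hIndep k v hv
    have h1 : Integrable (ind k * fun ω => ∏ j ∈ Finset.range k, v (Φhat j ω)) P :=
      hindep'.integrable_mul (hindint k) hprod.1
    have h2 := hindep'.integral_mul_eq_mul_integral (hindint k).aestronglyMeasurable hprod.1.aestronglyMeasurable
    refine ⟨h1, ?_⟩
    have : (∫ ω, ind k ω * ∏ j ∈ Finset.range k, v (Φhat j ω) ∂P)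
        = ∫ ω, (ind k * fun ω => ∏ j ∈ Finset.range k, v (Φhat j ω)) ω ∂P := rfl
    rw [this, h2, hindint' k, hprod.2]
  -- summands
  set F : ℕ → Ω → ℝ := fun k ω =>
    Real.exp lam * (ind k ω * ∏ j ∈ Finset.range k, Φhat j ω / lam) with hF_def
  have hFmeas : ∀ k, Measurable (F k) := fun k =>
    measurable_const.mul ((hindmeas k).mul
      (Finset.measurable_prod _ fun j _ => (hΦmeas j).div_const lam))
  -- pointwise decomposition of the estimator
  set g : Ω → ℝ := fun ω => Real.exp lam * ∏ j ∈ Finset.range (κ ω), Φhat j ω / lam with hg_def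
  have htsum : ∀ ω, (∑' k, F k ω) = g ω := by
    intro ω
    rw [tsum_eq_single (κ ω) ?_]
    · simp [hF_def, hind01, hg_def]
    · intro k hk
      simp [hF_def, hind01, Ne.symm hk]
  -- the integral of |F k|
  have habs : ∀ k ω, |F k ω| = Real.exp lam *
      (ind k ω * ∏ j ∈ Finset.range k, |Φhat j ω| / lam) := by
    intro k ω
    rw [abs_mul, abs_mul, abs_of_nonneg (hindnn k ω),
      abs_of_pos (Real.exp_pos lam), Finset.abs_prod]
    congr 1
    congr 1
    exact Finset.prod_congr rfl fun j _ => by rw [abs_div, abs_of_pos hlam]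
  have keyabs := fun k => key k (fun x => |x| / lam) (measurable_abs.div_const lam)
    (fun j => ((hintj j).abs).div_const lam) (M / lam)
    (fun j => by rw [integral_div, habsj j])
  have keyid := fun k => key k (fun x => x / lam) (measurable_id.div_const lam)
    (fun j => (hintj j).div_const lam) (Φ / lam)
    (fun j => by rw [integral_div, hmeanj j])
  have hsimp : ∀ (x : ℝ) (k : ℕ), Real.exp lam *
      ((lam ^ k * Real.exp (-lam) / (Nat.factorial k)) * (x / lam) ^ k)
      = x ^ k / (Nat.factorial k) := by
    intro x k
    rw [div_pow, Real.exp_neg]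
    have h1 : (lam : ℝ) ^ k ≠ 0 := pow_ne_zero _ hlam.ne'
    have h2 : Real.exp lam ≠ 0 := Real.exp_ne_zero lam
    have h3 : (Nat.factorial k : ℝ) ≠ 0 := Nat.cast_ne_zero.mpr k.factorial_ne_zero
    field_simp
  have hFint : ∀ k, Integrable (F k) P := fun k => ((keyid k).1).const_mul _
  have hFintegral : ∀ k, ∫ ω, F k ω ∂P = Φ ^ k / (Nat.factorial k) := by
    intro k
    rw [hF_def]
    rw [integral_const_mul, (keyid k).2, hpk k, hsimp]
  have hFabs : ∀ k, ∫ ω, |F k ω| ∂P = M ^ k / (Nat.factorial k) := by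
    intro k
    calc ∫ ω, |F k ω| ∂P
        = ∫ ω, Real.exp lam * (ind k ω * ∏ j ∈ Finset.range k, |Φhat j ω| / lam) ∂P := by
          simp_rw [habs]
      _ = M ^ k / (Nat.factorial k) := by
          rw [integral_const_mul, (keyabs k).2, hpk k, hsimp]
  have hexp : ∀ x : ℝ, ∑' k : ℕ, x ^ k / (Nat.factorial k) = Real.exp x := by
    intro x
    rw [Real.exp_eq_exp_ℝ, NormedSpace.exp_eq_tsum_div]
  have hMsum : Summable fun k : ℕ => M ^ k / (Nat.factorial k : ℝ) :=
    Real.summable_pow_div_factorial M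
  have hlint : ∀ k, ∫⁻ ω, ‖F k ω‖₊ ∂P = ENNReal.ofReal (M ^ k / (Nat.factorial k)) := by
    intro k
    rw [show (∫⁻ ω, (‖F k ω‖₊ : ℝ≥0∞) ∂P) = ∫⁻ ω, ‖F k ω‖ₑ ∂P from rfl,
      ← ofReal_integral_norm_eq_lintegral_enorm (hFint k)]
    congr 1
    simp_rw [Real.norm_eq_abs]
    exact hFabs k
  have hsum_ne : (∑' k, ∫⁻ ω, ‖F k ω‖₊ ∂P) ≠ ⊤ := by
    simp_rw [hlint]
    rw [← ENNReal.ofReal_tsum_of_nonneg (fun k => by positivity) hMsum]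
    exact ENNReal.ofReal_ne_top
  have hgmeas : Measurable g := by
    have hrepr : g = (fun p : (ℕ → ℝ) × ℕ => Real.exp lam * ∏ j ∈ Finset.range p.2, p.1 j / lam)
        ∘ (fun ω => (fun j => Φhat j ω, κ ω)) := rfl
    rw [hrepr]
    refine Measurable.comp ?_ ((measurable_pi_lambda _ fun j => hΦmeas j).prodMk hκmeas)
    refine measurable_from_prod_countable_left fun k => ?_
    simp only
    exact measurable_const.mul
      (Finset.measurable_prod _ fun j _ => by fun_prop)
  have hgint : Integrable g P := by
    refine ⟨hgmeas.aestronglyMeasurable, ?_⟩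
    have hpt : ∀ ω, (‖g ω‖₊ : ℝ≥0∞) = ∑' k, (‖F k ω‖₊ : ℝ≥0∞) := by
      intro ω
      rw [tsum_eq_single (κ ω) (fun k hk => by simp [hF_def, hind01, Ne.symm hk])]
      have : g ω = F (κ ω) ω := by simp [hg_def, hF_def, hind01]
      rw [this]
    show (∫⁻ ω, ‖g ω‖₊ ∂P) < ⊤
    calc ∫⁻ ω, ‖g ω‖₊ ∂P = ∫⁻ ω, ∑' k, (‖F k ω‖₊ : ℝ≥0∞) ∂P := lintegral_congr hpt
      _ = ∑' k, ∫⁻ ω, ‖F k ω‖₊ ∂P :=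
          lintegral_tsum fun k => ((hFmeas k).enorm).aemeasurable
      _ < ⊤ := lt_top_iff_ne_top.mpr hsum_ne
  refine ⟨hgint, ?_⟩
  calc ∫ ω, g ω ∂P = ∫ ω, ∑' k, F k ω ∂P :=
        integral_congr_ae (ae_of_all _ fun ω => (htsum ω).symm)
    _ = ∑' k, ∫ ω, F k ω ∂P :=
        integral_tsum (fun k => (hFmeas k).aestronglyMeasurable) hsum_ne
    _ = ∑' k, Φ ^ k / (Nat.factorial k) := by simp_rw [hFintegral]
    _ = Real.exp Φ := hexp Φ
end
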